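/- Let n ≥ 1, α > 0, and let σ, w be weights on ℝⁿ with finite two-weight A₂ constant 𝒜₂. For dyadic cubes Q, R set A_{QR}^α = ℓ(Q)^{α/2} ℓ(R)^{α/2} D(Q,R)^{−(n+α)} σ(Q)^{1/2} w(R)^{1/2}, where D(Q,R) = ℓ(Q) + ℓ(R) + dist(Q,R). Then for all nonnegative families (x_Q)_{Q ∈ 𝒟} and (y_R)_{R ∈ 𝒟}, ( Σ_{Q,R ∈ 𝒟} A_{QR}^α x_Q y_R )² ≤ C 𝒜₂² ( Σ_{Q ∈ 𝒟} x_Q² ) ( Σ_{R ∈ 𝒟} y_R² ), where C depends only on n and α. -/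

import Mathlib

open MeasureTheory Set
open scoped ENNReal NNReal BigOperators

noncomputable section

/-- Euclidean space `ℝⁿ`. -/
abbrev E (n : ℕ) := EuclideanSpace ℝ (Fin n)

/-- An axis-parallel cube in `ℝⁿ`, given by its corner and positive side length. -/
structure Cube (n : ℕ) where
  corner : E n
  side : ℝ
  side_pos : 0 < side

namespace Cube

/-- The (half-open) cube as a subset of `ℝⁿ`. -/
def set {n : ℕ} (Q : Cube n) : Set (E n) :=
  {x | ∀ i, Q.corner i ≤ x i ∧ x i < Q.corner i + Q.side}

/-- The Lebesgue measure `|Q| = ℓ(Q)ⁿ` of a cube. -/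
def vol {n : ℕ} (Q : Cube n) : ℝ := Q.side ^ n

/-- The cube concentric with `Q` with side length `C·ℓ(Q)`. -/
def dilate {n : ℕ} (Q : Cube n) (C : ℝ) : Set (E n) :=
  {x | ∀ i, Q.corner i + Q.side / 2 - C * Q.side / 2 ≤ x i ∧
        x i < Q.corner i + Q.side / 2 + C * Q.side / 2}

/-- Membership in the standard dyadic grid of `ℝⁿ`. -/
def IsDyadic {n : ℕ} (Q : Cube n) : Prop :=
  ∃ k : ℤ, ∃ m : Fin n → ℤ, Q.side = 2 ^ k ∧ ∀ i, Q.corner i = 2 ^ k * m i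

/-- The dyadic child of `Q` indexed by `ε ∈ {0,1}ⁿ`. -/
def child {n : ℕ} (Q : Cube n) (ε : Fin n → Bool) : Cube n :=
  ⟨WithLp.toLp 2 (fun i => Q.corner i + if ε i then Q.side / 2 else 0 : Fin n → ℝ), Q.side / 2,
    half_pos Q.side_pos⟩

end Cube

/-- Distance between two subsets of `ℝⁿ`. -/
def sdist {n : ℕ} (A B : Set (E n)) : ℝ := sInf (Set.image2 dist A B)

/-- A weight: a nonnegative locally integrable function on `ℝⁿ`. -/
def IsWeight {n : ℕ} (σ : E n → ℝ) : Prop :=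
  (∀ x, 0 ≤ σ x) ∧ MeasureTheory.LocallyIntegrable σ

/-- `σ(Q) = ∫_Q σ dx`. -/
def cInt {n : ℕ} (σ : E n → ℝ) (Q : Cube n) : ℝ := ∫ x in Q.set, σ x

/-- The square `𝒜₂²` of the two-weight A₂ constant, as an extended real. -/
def A2sq {n : ℕ} (σ w : E n → ℝ) : ℝ≥0∞ :=
  ⨆ Q : Cube n, ENNReal.ofReal ((cInt σ Q / Q.vol) * (cInt w Q / Q.vol))

/-- `P_t^α` applied to the measure `g dx` (`g` a possibly signed density):
`P_t^α(g dx)(y) = ∫ t^α (t² + |y−z|²)^{-(n+α)/2} g(z) dz`. -/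
def Pt (n : ℕ) (α : ℝ) (g : E n → ℝ) (y : E n) (t : ℝ) : ℝ :=
  ∫ z, t ^ α / (t ^ 2 + dist y z ^ 2) ^ (((n : ℝ) + α) / 2) * g z

/-- `P_t^α` applied to a positive measure `ν`. -/
def PtM (n : ℕ) (α : ℝ) (ν : Measure (E n)) (y : E n) (t : ℝ) : ℝ :=
  ∫ z, t ^ α / (t ^ 2 + dist y z ^ 2) ^ (((n : ℝ) + α) / 2) ∂ν

/-- `|∇P_t^α (g dx)(y,t)|²`, where `∇ = (∂_{y₁},…,∂_{yₙ},∂_t)`. -/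
def gradPSq (n : ℕ) (α : ℝ) (g : E n → ℝ) (y : E n) (t : ℝ) : ℝ :=
  (∑ i : Fin n,
      (deriv (fun s : ℝ => Pt n α g (y + s • EuclideanSpace.single i (1 : ℝ)) t) 0) ^ 2)
    + (deriv (fun s : ℝ => Pt n α g y s) t) ^ 2

/-- The square of the Littlewood–Paley function `g_λ^{*,α}(g dx)(x)`. -/
def gStarSq (n : ℕ) (α lam : ℝ) (g : E n → ℝ) (x : E n) : ℝ≥0∞ :=
  ∫⁻ y, ∫⁻ t in Set.Ioi (0 : ℝ),
    ENNReal.ofReal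
      ((t / (t + dist x y)) ^ ((n : ℝ) * lam) * gradPSq n α g y t / t ^ ((n : ℝ) - 1))

/-- `‖f‖²_{L²(σ)}` as an extended real. -/
def l2sq {n : ℕ} (σ f : E n → ℝ) : ℝ≥0∞ := ∫⁻ x, ENNReal.ofReal (f x ^ 2 * σ x)

/-- The square `ℬ²` of the testing constant, as an extended real. -/
def Bsq (n : ℕ) (α lam : ℝ) (σ w : E n → ℝ) : ℝ≥0∞ :=
  ⨆ Q : Cube n,
    (∫⁻ y, ∫⁻ t in Set.Ioc (0 : ℝ) Q.side, ∫⁻ x in Q.set,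
        ENNReal.ofReal ((t / (t + dist x y)) ^ ((n : ℝ) * lam)
          * gradPSq n α (Q.set.indicator σ) y t * w x / t ^ ((n : ℝ) - 1)))
      / ENNReal.ofReal (cInt σ Q)

/-- The two-weight norm inequality `‖g_λ^{*,α}(fσ)‖_{L²(w)} ≤ N ‖f‖_{L²(σ)}` (in squared form). -/
def OpBound (n : ℕ) (α lam : ℝ) (σ w : E n → ℝ) (N : ℝ) : Prop :=
  ∀ f : E n → ℝ, Measurable f → l2sq σ f < ⊤ →
    (∫⁻ x, gStarSq n α lam (fun z => f z * σ z) x * ENNReal.ofReal (w x))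
      ≤ ENNReal.ofReal (N ^ 2) * l2sq σ f

/-- The family `𝒞_α` of test functions for the intrinsic square function. -/
def CAlpha (n : ℕ) (α : ℝ) (φ : E n → ℝ) : Prop :=
  Function.support φ ⊆ Metric.closedBall 0 1 ∧ (∫ x, φ x) = 0 ∧
    ∀ x x' : E n, |φ x - φ x'| ≤ ‖x - x'‖ ^ α

/-- `A_α(g dx)(y,t) = sup_{φ ∈ 𝒞_α} |(g dx) * φ_t(y)|`. -/
def AIntr (n : ℕ) (α : ℝ) (g : E n → ℝ) (y : E n) (t : ℝ) : ℝ :=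
  ⨆ φ : {φ : E n → ℝ // CAlpha n α φ},
    |∫ z, t ^ (-(n : ℝ)) * φ.1 (t⁻¹ • (y - z)) * g z|

/-- The square of the intrinsic square function `g_{λ,α}^*(g dx)(x)`. -/
def gIntrSq (n : ℕ) (α lam : ℝ) (g : E n → ℝ) (x : E n) : ℝ≥0∞ :=
  ∫⁻ y, ∫⁻ t in Set.Ioi (0 : ℝ),
    ENNReal.ofReal
      ((t / (t + dist x y)) ^ ((n : ℝ) * lam) * AIntr n α g y t ^ 2 / t ^ ((n : ℝ) + 1))

/-- The square `ℬ_α²` of the intrinsic testing constant. -/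
def BIntrSq (n : ℕ) (α lam : ℝ) (σ w : E n → ℝ) : ℝ≥0∞ :=
  ⨆ Q : Cube n,
    (∫⁻ y, ∫⁻ t in Set.Ioc (0 : ℝ) Q.side, ∫⁻ x in Q.set,
        ENNReal.ofReal ((t / (t + dist x y)) ^ ((n : ℝ) * lam)
          * AIntr n α (Q.set.indicator σ) y t ^ 2 * w x / t ^ ((n : ℝ) + 1)))
      / ENNReal.ofReal (cInt σ Q)

/-- The two-weight norm inequality for the intrinsic square function (in squared form). -/
def OpBoundIntr (n : ℕ) (α lam : ℝ) (σ w : E n → ℝ) (N : ℝ) : Prop :=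
  ∀ f : E n → ℝ, Measurable f → l2sq σ f < ⊤ →
    (∫⁻ x, gIntrSq n α lam (fun z => f z * σ z) x * ENNReal.ofReal (w x))
      ≤ ENNReal.ofReal (N ^ 2) * l2sq σ f

/-- A dyadic cube `I` is good (w.r.t. parameters `r`, `γ`) if there is no dyadic `J` with
`ℓ(J) ≥ 2^r ℓ(I)` and `dist(I, ∂J) ≤ ℓ(I)^γ ℓ(J)^{1−γ}`. -/
def IsGood (n : ℕ) (r : ℕ) (γ : ℝ) (I : Cube n) : Prop :=
  ¬ ∃ J : Cube n, J.IsDyadic ∧ 2 ^ r * I.side ≤ J.side ∧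
      sdist I.set (frontier J.set) ≤ I.side ^ γ * J.side ^ (1 - γ)

/-- The defining conditions for the Whitney family `𝒲_I`. -/
def WhitneyPred (n : ℕ) (r : ℕ) (γ : ℝ) (I K : Cube n) : Prop :=
  K.IsDyadic ∧ K.set ⊆ I.set ∧ 2 ^ r * K.side ≤ I.side ∧
    K.side ^ γ * I.side ^ (1 - γ) ≤ sdist K.set (frontier I.set)

/-- `K ∈ 𝒲_I`: `K` is a maximal dyadic cube satisfying the Whitney conditions in `I`. -/
def InWhitney (n : ℕ) (r : ℕ) (γ : ℝ) (I K : Cube n) : Prop :=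
  WhitneyPred n r γ I K ∧
    ∀ K' : Cube n, WhitneyPred n r γ I K' → K.set ⊆ K'.set → K'.set = K.set

/-- The size and Hölder conditions on `ψ` with constant `C₀`. -/
def PsiCond (n : ℕ) (α C₀ : ℝ) (ψ : E n → ℝ) : Prop :=
  (∀ x : E n, |ψ x| ≤ C₀ * (1 + ‖x‖) ^ (-(n : ℝ) - α)) ∧
    ∀ x x' : E n, |ψ x - ψ x'| ≤ C₀ * ‖x - x'‖ ^ α * (1 + ‖x‖) ^ (-(n : ℝ) - α)

/-- `ψ_t * (g dx)(u) = ∫ t^{-n} ψ((u−z)/t) g(z) dz`. -/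
def psiConv (n : ℕ) (ψ : E n → ℝ) (t : ℝ) (g : E n → ℝ) (u : E n) : ℝ :=
  ∫ z, t ^ (-(n : ℝ)) * ψ (t⁻¹ • (u - z)) * g z

/-- The average `E_Q^σ f = σ(Q)⁻¹ ∫_Q f σ dx` (with the convention `0` if `σ(Q) = 0`). -/
def avg (n : ℕ) (σ f : E n → ℝ) (Q : Cube n) : ℝ :=
  (∫ x in Q.set, f x * σ x) / cInt σ Q

/-- The martingale difference `Δ_Q^σ f = Σ_{Q' child of Q} (E_{Q'}^σ f − E_Q^σ f) 1_{Q'}`. -/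
def mdiff (n : ℕ) (σ f : E n → ℝ) (Q : Cube n) (x : E n) : ℝ :=
  ∑ ε : Fin n → Bool,
    ((Q.child ε).set).indicator (fun _ => avg n σ f (Q.child ε) - avg n σ f Q) x

/-- The Poisson average `𝒫_α(K, g dx)` of a signed density `g`. -/
def poissonAvg (n : ℕ) (α : ℝ) (K : Cube n) (g : E n → ℝ) : ℝ :=
  ∫ x, K.side ^ α / (K.side + Metric.infDist x K.set) ^ ((n : ℝ) + α) * g x

/-- The Poisson average `𝒫_α(K, g dx)` of a nonnegative density `g`, as an extended real. -/
def poissonAvgD (n : ℕ) (α : ℝ) (K : Cube n) (g : E n → ℝ) : ℝ≥0∞ :=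
  ∫⁻ x, ENNReal.ofReal (K.side ^ α / (K.side + Metric.infDist x K.set) ^ ((n : ℝ) + α) * g x)

/-- The Poisson average `𝒫_α(K, ν)` of a positive measure `ν`. -/
def poissonAvgM (n : ℕ) (α : ℝ) (K : Cube n) (ν : Measure (E n)) : ℝ≥0∞ :=
  ∫⁻ x, ENNReal.ofReal (K.side ^ α / (K.side + Metric.infDist x K.set) ^ ((n : ℝ) + α)) ∂ν


lemma rpow_half_sq (x : ℝ≥0∞) : (x ^ (2⁻¹ : ℝ)) ^ 2 = x := by
  rw [← ENNReal.rpow_natCast (x ^ (2⁻¹:ℝ)) 2, ← ENNReal.rpow_mul]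
  norm_num

lemma finset_cs {ι : Type*} (s : Finset ι) (f g : ι → ℝ≥0∞) (hf : ∀ i, f i ≠ ⊤)
    (hg : ∀ i, g i ≠ ⊤) :
    (∑ i ∈ s, f i * g i) ^ 2 ≤ (∑ i ∈ s, f i ^ 2) * (∑ i ∈ s, g i ^ 2) := by
  have hF : ∀ i, f i = ((f i).toNNReal : ℝ≥0∞) := fun i => (ENNReal.coe_toNNReal (hf i)).symm
  have hG : ∀ i, g i = ((g i).toNNReal : ℝ≥0∞) := fun i => (ENNReal.coe_toNNReal (hg i)).symm
  calc (∑ i ∈ s, f i * g i) ^ 2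
      = ((↑(∑ i ∈ s, (f i).toNNReal * (g i).toNNReal) : ℝ≥0∞)) ^ 2 := by
        push_cast; congr 1; refine Finset.sum_congr rfl fun i _ => ?_
        rw [hF i, hG i]; simp
    _ = ((↑((∑ i ∈ s, (f i).toNNReal * (g i).toNNReal) ^ 2) : ℝ≥0∞)) := by push_cast; ring
    _ ≤ ((↑((∑ i ∈ s, (f i).toNNReal ^ 2) * (∑ i ∈ s, (g i).toNNReal ^ 2)) : ℝ≥0∞)) := by
        exact_mod_cast ENNReal.coe_le_coe.mpr (Finset.sum_mul_sq_le_sq_mul_sq s _ _)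
    _ = (∑ i ∈ s, f i ^ 2) * (∑ i ∈ s, g i ^ 2) := by
        push_cast
        congr 1 <;> refine Finset.sum_congr rfl fun i _ => ?_
        · rw [hF i]; simp
        · rw [hG i]; simp

lemma ecs {ι : Type*} (f g : ι → ℝ≥0∞) :
    ∑' i, f i * g i ≤ (∑' i, f i ^ 2) ^ (2⁻¹ : ℝ) * (∑' i, g i ^ 2) ^ (2⁻¹ : ℝ) := by
  set A := ∑' i, f i ^ 2 with hA
  set B := ∑' i, g i ^ 2 with hB
  rcases eq_or_ne A ⊤ with hAt | hAt
  · rcases eq_or_ne B 0 with hB0 | hB0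
    · have hg0 : ∀ i, g i = 0 := by
        intro i
        have := ENNReal.le_tsum (f := fun i => g i ^ 2) i
        rw [← hB, hB0, le_zero_iff] at this
        exact pow_eq_zero_iff (n := 2) (by norm_num) |>.mp this
      simp [hg0]
    · rw [hAt, ENNReal.top_rpow_of_pos (by norm_num)]
      rw [ENNReal.top_mul (by simp [ENNReal.rpow_eq_zero_iff, hB0])]
      exact le_top
  · rcases eq_or_ne B ⊤ with hBt | hBt
    · rcases eq_or_ne A 0 with hA0 | hA0
      · have hf0 : ∀ i, f i = 0 := by
          intro i
          have := ENNReal.le_tsum (f := fun i => f i ^ 2) i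
          rw [← hA, hA0, le_zero_iff] at this
          exact pow_eq_zero_iff (n := 2) (by norm_num) |>.mp this
        simp [hf0]
      · rw [hBt, ENNReal.top_rpow_of_pos (by norm_num)]
        rw [mul_comm, ENNReal.top_mul (by simp [ENNReal.rpow_eq_zero_iff, hA0])]
        exact le_top
    · have hf : ∀ i, f i ≠ ⊤ := by
        intro i h
        apply hAt
        refine eq_top_iff.mpr ?_
        calc (⊤:ℝ≥0∞) = f i ^ 2 := by rw [h, ENNReal.top_pow (by norm_num)]
          _ ≤ A := ENNReal.le_tsum i
      have hg : ∀ i, g i ≠ ⊤ := by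
        intro i h
        apply hBt
        refine eq_top_iff.mpr ?_
        calc (⊤:ℝ≥0∞) = g i ^ 2 := by rw [h, ENNReal.top_pow (by norm_num)]
          _ ≤ B := ENNReal.le_tsum i
      rw [ENNReal.tsum_eq_iSup_sum]
      refine iSup_le fun s => ?_
      have h1 : (∑ i ∈ s, f i * g i) ^ 2 ≤ A * B := by
        refine le_trans (finset_cs s f g hf hg) (mul_le_mul' ?_ ?_) <;>
          exact ENNReal.sum_le_tsum s
      calc ∑ i ∈ s, f i * g i
          = ((∑ i ∈ s, f i * g i) ^ 2) ^ (2⁻¹:ℝ) := by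
            rw [← ENNReal.rpow_natCast _ 2, ← ENNReal.rpow_mul]; norm_num
        _ ≤ (A * B) ^ (2⁻¹:ℝ) := ENNReal.rpow_le_rpow h1 (by norm_num)
        _ = A ^ (2⁻¹:ℝ) * B ^ (2⁻¹:ℝ) := ENNReal.mul_rpow_of_nonneg _ _ (by norm_num)

lemma geo_nat (r : ℝ) (hr0 : 0 ≤ r) (hr1 : r < 1) :
    ∑' j : ℕ, ENNReal.ofReal (r ^ j) = ENNReal.ofReal ((1 - r)⁻¹) := by
  have : ∀ j : ℕ, ENNReal.ofReal (r ^ j) = (ENNReal.ofReal r) ^ j := fun j =>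
    ENNReal.ofReal_pow hr0 j
  simp_rw [this, ENNReal.tsum_geometric]
  rw [← ENNReal.ofReal_one, ← ENNReal.ofReal_sub _ hr0, ENNReal.ofReal_inv_of_pos (by linarith)]

lemma two_rpow_pos (x : ℝ) : 0 < (2:ℝ) ^ x := Real.rpow_pos_of_pos (by norm_num) x

lemma two_rpow_neg_lt_one {ρ : ℝ} (hρ : 0 < ρ) : (2:ℝ) ^ (-ρ) < 1 :=
  Real.rpow_lt_one_of_one_lt_of_neg (by norm_num) (by linarith)

lemma geo1 (ρ : ℝ) (hρ : 0 < ρ) (c₀ : ℤ) :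
    ∑' c : ℤ, (if c₀ ≤ c then ENNReal.ofReal ((2:ℝ) ^ (-(c:ℝ) * ρ)) else 0)
      ≤ ENNReal.ofReal ((2:ℝ) ^ (-(c₀:ℝ) * ρ) * (1 - (2:ℝ) ^ (-ρ))⁻¹) := by
  have hinj : Function.Injective (fun j : ℕ => c₀ + (j : ℤ)) := by
    intro a b h; simpa using h
  rw [← Function.Injective.tsum_eq hinj (by
    intro c hc
    by_cases h : c₀ ≤ c
    · exact ⟨(c - c₀).toNat, by simp; omega⟩
    · simp [h] at hc)]
  have hterm : ∀ j : ℕ, (if c₀ ≤ c₀ + (j:ℤ) then ENNReal.ofReal ((2:ℝ) ^ (-((c₀ + (j:ℤ) : ℤ):ℝ) * ρ)) else 0)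
      = ENNReal.ofReal ((2:ℝ) ^ (-(c₀:ℝ) * ρ)) * ENNReal.ofReal (((2:ℝ) ^ (-ρ)) ^ j) := by
    intro j
    rw [if_pos (by omega), ← ENNReal.ofReal_mul (by positivity)]
    congr 1
    rw [← Real.rpow_natCast ((2:ℝ) ^ (-ρ)) j, ← Real.rpow_mul (by norm_num),
      ← Real.rpow_add (by norm_num)]
    congr 1
    push_cast
    ring
  simp_rw [hterm]
  rw [ENNReal.tsum_mul_left, geo_nat _ (by positivity) (two_rpow_neg_lt_one hρ),
    ← ENNReal.ofReal_mul (by positivity)]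

lemma geo2 (ρ : ℝ) (hρ : 0 < ρ) (k : ℤ) :
    ∑' l : ℤ, ENNReal.ofReal ((2:ℝ) ^ (-(|k - l| : ℤ) * ρ))
      ≤ ENNReal.ofReal (2 * (1 - (2:ℝ) ^ (-ρ))⁻¹) := by
  have hone : 0 ≤ (1 - (2:ℝ)^(-ρ))⁻¹ := inv_nonneg.mpr (by linarith [two_rpow_neg_lt_one hρ])
  have hpt : ∀ l : ℤ, ENNReal.ofReal ((2:ℝ) ^ (-(|k - l| : ℤ) * ρ))
      ≤ (if k ≤ l then ENNReal.ofReal ((2:ℝ) ^ (-(l:ℝ) * ρ) * (2:ℝ) ^ ((k:ℝ) * ρ)) else 0)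
        + (if l ≤ k then ENNReal.ofReal ((2:ℝ) ^ ((l:ℝ) * ρ) * (2:ℝ) ^ (-(k:ℝ) * ρ)) else 0) := by
    intro l
    rcases le_total k l with h | h
    · refine le_trans ?_ (le_add_of_nonneg_right (zero_le))
      rw [if_pos h]
      apply ENNReal.ofReal_le_ofReal
      rw [← Real.rpow_add (by norm_num)]
      apply Real.rpow_le_rpow_left_iff (x := (2:ℝ)) (by norm_num) |>.mpr
      have habs : ((|k - l| : ℤ) : ℝ) = (l:ℝ) - (k:ℝ) := by
        have h2 : |k - l| = l - k := by rw [abs_sub_comm]; exact abs_of_nonneg (by omega)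
        rw [h2]; push_cast; ring
      exact le_of_eq (by rw [habs]; ring)
    · refine le_trans ?_ (le_add_of_nonneg_left (zero_le))
      rw [if_pos h]
      apply ENNReal.ofReal_le_ofReal
      rw [← Real.rpow_add (by norm_num)]
      apply Real.rpow_le_rpow_left_iff (x := (2:ℝ)) (by norm_num) |>.mpr
      have habs : ((|k - l| : ℤ) : ℝ) = (k:ℝ) - (l:ℝ) := by
        have h2 : |k - l| = k - l := abs_of_nonneg (by omega)
        rw [h2]; push_cast; ring
      exact le_of_eq (by rw [habs]; ring)
  calc ∑' l : ℤ, ENNReal.ofReal ((2:ℝ) ^ (-(|k - l| : ℤ) * ρ))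
      ≤ (∑' l : ℤ, (if k ≤ l then ENNReal.ofReal ((2:ℝ) ^ (-(l:ℝ) * ρ) * (2:ℝ) ^ ((k:ℝ) * ρ)) else 0))
        + (∑' l : ℤ, (if l ≤ k then ENNReal.ofReal ((2:ℝ) ^ ((l:ℝ) * ρ) * (2:ℝ) ^ (-(k:ℝ) * ρ)) else 0)) := by
        rw [← ENNReal.tsum_add]; exact ENNReal.tsum_le_tsum hpt
    _ ≤ ENNReal.ofReal ((1 - (2:ℝ) ^ (-ρ))⁻¹) + ENNReal.ofReal ((1 - (2:ℝ) ^ (-ρ))⁻¹) := by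
        gcongr
        · -- sum over l ≥ k of 2^{-(l-k)ρ}
          have : ∀ l : ℤ, (if k ≤ l then ENNReal.ofReal ((2:ℝ) ^ (-(l:ℝ) * ρ) * (2:ℝ) ^ ((k:ℝ) * ρ)) else 0)
              = (if k ≤ l then ENNReal.ofReal ((2:ℝ) ^ (-(l:ℝ) * ρ)) else 0) * ENNReal.ofReal ((2:ℝ) ^ ((k:ℝ) * ρ)) := by
            intro l
            split <;> simp [ENNReal.ofReal_mul (le_of_lt (two_rpow_pos _))]
          simp_rw [this]
          rw [ENNReal.tsum_mul_right]
          calc _ ≤ ENNReal.ofReal ((2:ℝ) ^ (-(k:ℝ) * ρ) * (1 - (2:ℝ) ^ (-ρ))⁻¹) * ENNReal.ofReal ((2:ℝ) ^ ((k:ℝ) * ρ)) := by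
                gcongr
                exact geo1 ρ hρ k
            _ = ENNReal.ofReal ((1 - (2:ℝ) ^ (-ρ))⁻¹) := by
                rw [← ENNReal.ofReal_mul (mul_nonneg (two_rpow_pos _).le hone)]
                congr 1
                rw [mul_comm ((2:ℝ) ^ (-(k:ℝ) * ρ)) _, mul_assoc, ← Real.rpow_add (by norm_num)]
                simp
        · -- sum over l ≤ k of 2^{-(k-l)ρ} : reindex l ↦ -l
          have hneg : ∑' l : ℤ, (if l ≤ k then ENNReal.ofReal ((2:ℝ) ^ ((l:ℝ) * ρ) * (2:ℝ) ^ (-(k:ℝ) * ρ)) else 0)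
              = ∑' l : ℤ, (if -k ≤ l then ENNReal.ofReal ((2:ℝ) ^ (-(l:ℝ) * ρ) * (2:ℝ) ^ (-(k:ℝ) * ρ)) else 0) := by
            refine ((Equiv.neg ℤ).tsum_eq _).symm.trans ?_
            refine tsum_congr fun l => ?_
            simp only [Equiv.neg_apply]
            have h1 : (-l : ℤ) ≤ k ↔ -k ≤ l := by omega
            have h2 : (((-l : ℤ)):ℝ) * ρ = -(l:ℝ) * ρ := by push_cast; ring
            rw [h2]
            exact if_congr h1 rfl rfl
          rw [hneg]
          have : ∀ l : ℤ, (if -k ≤ l then ENNReal.ofReal ((2:ℝ) ^ (-(l:ℝ) * ρ) * (2:ℝ) ^ (-(k:ℝ) * ρ)) else 0)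
              = (if -k ≤ l then ENNReal.ofReal ((2:ℝ) ^ (-(l:ℝ) * ρ)) else 0) * ENNReal.ofReal ((2:ℝ) ^ (-(k:ℝ) * ρ)) := by
            intro l
            split <;> simp [ENNReal.ofReal_mul (le_of_lt (two_rpow_pos _))]
          simp_rw [this]
          rw [ENNReal.tsum_mul_right]
          calc _ ≤ ENNReal.ofReal ((2:ℝ) ^ (-((-k:ℤ):ℝ) * ρ) * (1 - (2:ℝ) ^ (-ρ))⁻¹) * ENNReal.ofReal ((2:ℝ) ^ (-(k:ℝ) * ρ)) := by
                gcongr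
                exact geo1 ρ hρ (-k)
            _ = ENNReal.ofReal ((1 - (2:ℝ) ^ (-ρ))⁻¹) := by
                rw [← ENNReal.ofReal_mul (mul_nonneg (two_rpow_pos _).le hone)]
                congr 1
                push_cast
                rw [mul_comm ((2:ℝ) ^ (-(-(k:ℝ)) * ρ)) _, mul_assoc, ← Real.rpow_add (by norm_num)]
                ring_nf
                simp
    _ = ENNReal.ofReal (2 * (1 - (2:ℝ) ^ (-ρ))⁻¹) := by
        rw [← ENNReal.ofReal_add hone hone]
        congr 1; ring
lemma Cube.ext' {n : ℕ} {Q R : Cube n} (hc : Q.corner = R.corner) (hs : Q.side = R.side) :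
    Q = R := by
  cases Q; cases R; simp_all

def dQ (n : ℕ) (k : ℤ) (m : Fin n → ℤ) : Cube n :=
  ⟨WithLp.toLp 2 (fun i => (2:ℝ)^k * m i : Fin n → ℝ), (2:ℝ)^k, by positivity⟩

@[simp] lemma dQ_corner {n : ℕ} (k : ℤ) (m : Fin n → ℤ) (i : Fin n) :
    (dQ n k m).corner i = (2:ℝ)^k * m i := rfl

@[simp] lemma dQ_side {n : ℕ} (k : ℤ) (m : Fin n → ℤ) : (dQ n k m).side = (2:ℝ)^k := rfl

lemma dQ_isDyadic (n : ℕ) (k : ℤ) (m : Fin n → ℤ) : (dQ n k m).IsDyadic :=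
  ⟨k, m, rfl, fun _ => rfl⟩

lemma mem_dQ {n : ℕ} {k : ℤ} {m : Fin n → ℤ} {x : E n} :
    x ∈ (dQ n k m).set ↔ ∀ i, (2:ℝ)^k * m i ≤ x i ∧ x i < (2:ℝ)^k * m i + (2:ℝ)^k :=
  Iff.rfl

lemma dQ_nonempty (n : ℕ) (k : ℤ) (m : Fin n → ℤ) : ((dQ n k m).set).Nonempty := by
  refine ⟨WithLp.toLp 2 (fun i => (2:ℝ)^k * m i : Fin n → ℝ), fun i => ?_⟩
  simp only [Cube.set, Set.mem_setOf_eq, dQ_corner, dQ_side]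
  have : (0:ℝ) < 2^k := by positivity
  exact ⟨le_refl _, by linarith⟩

lemma cube_nonempty {n : ℕ} (Q : Cube n) : Q.set.Nonempty := by
  refine ⟨Q.corner, fun i => ⟨le_refl _, ?_⟩⟩
  have := Q.side_pos; linarith

/-- block index -/
def blk {n : ℕ} (e : ℕ) (m : Fin n → ℤ) : Fin n → ℤ := fun i => m i / (2:ℤ)^e

lemma dQ_subset_blk {n : ℕ} {k c : ℤ} (hkc : k ≤ c) (m : Fin n → ℤ) :
    (dQ n k m).set ⊆ (dQ n c (blk (c - k).toNat m)).set := by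
  intro x hx
  intro i
  obtain ⟨h1, h2⟩ := hx i
  simp only [dQ_corner, dQ_side] at h1 h2 ⊢
  set e : ℕ := (c - k).toNat with he
  have hce : c = k + (e : ℤ) := by omega
  have hpow : (2:ℝ)^e * (2:ℝ)^k = (2:ℝ)^c := by
    rw [hce, zpow_add₀ (by norm_num : (2:ℝ) ≠ 0), zpow_natCast]
    ring
  have hb1 : (2:ℤ)^e * blk e m i ≤ m i := by
    have := Int.mul_ediv_add_emod (m i) ((2:ℤ)^e)
    have := Int.emod_nonneg (m i) (by positivity : ((2:ℤ)^e) ≠ 0)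
    simp only [blk]
    omega
  have hb2 : m i + 1 ≤ (2:ℤ)^e * (blk e m i + 1) := by
    have h1e := Int.mul_ediv_add_emod (m i) ((2:ℤ)^e)
    have h2e := Int.emod_lt_of_pos (m i) (by positivity : (0:ℤ) < (2:ℤ)^e)
    simp only [blk]
    nlinarith [h1e, h2e]
  have h2k : (0:ℝ) < 2^k := by positivity
  have hb1R : (2:ℝ)^e * ((blk e m i : ℤ) : ℝ) ≤ ((m i : ℤ) : ℝ) := by exact_mod_cast hb1
  have hb2R : ((m i : ℤ) : ℝ) + 1 ≤ (2:ℝ)^e * (((blk e m i : ℤ) : ℝ) + 1) := by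
    exact_mod_cast hb2
  constructor
  · have hm := mul_le_mul_of_nonneg_left hb1R h2k.le
    calc (2:ℝ)^c * ((blk e m i : ℤ) : ℝ)
        = (2:ℝ)^k * ((2:ℝ)^e * ((blk e m i : ℤ):ℝ)) := by rw [← hpow]; ring
      _ ≤ (2:ℝ)^k * ((m i : ℤ):ℝ) := hm
      _ ≤ x i := h1
  · have hm := mul_le_mul_of_nonneg_left hb2R h2k.le
    calc x i < (2:ℝ)^k * ((m i:ℤ):ℝ) + (2:ℝ)^k := h2
      _ = (2:ℝ)^k * (((m i:ℤ):ℝ) + 1) := by ring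
      _ ≤ (2:ℝ)^k * ((2:ℝ)^e * (((blk e m i : ℤ):ℝ) + 1)) := hm
      _ = (2:ℝ)^c * ((blk e m i : ℤ):ℝ) + (2:ℝ)^c := by rw [← hpow]; ring

lemma dQ_disjoint {n : ℕ} {k : ℤ} {m p : Fin n → ℤ} (hmp : m ≠ p) :
    Disjoint (dQ n k m).set (dQ n k p).set := by
  rw [Set.disjoint_left]
  intro x hxm hxp
  obtain ⟨i, hi⟩ := Function.ne_iff.mp hmp
  obtain ⟨h1, h2⟩ := hxm i
  obtain ⟨h3, h4⟩ := hxp i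
  simp only [dQ_corner, dQ_side] at h1 h2 h3 h4
  have hpos : (0:ℝ) < 2^k := by positivity
  have hlt1 : ((m i):ℝ) < p i + 1 := by nlinarith
  have hlt2 : ((p i):ℝ) < m i + 1 := by nlinarith
  have e1 : m i < p i + 1 := by exact_mod_cast hlt1
  have e2 : p i < m i + 1 := by exact_mod_cast hlt2
  exact hi (by omega)

lemma abs_coord_le_dist {n : ℕ} (x y : E n) (i : Fin n) : |x i - y i| ≤ dist x y := by
  rw [EuclideanSpace.dist_eq]
  have h1 : |x i - y i| = Real.sqrt ((x i - y i)^2) := (Real.sqrt_sq_eq_abs _).symm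
  rw [h1]
  apply Real.sqrt_le_sqrt
  have : (x i - y i)^2 = dist (x i) (y i) ^ 2 := by rw [Real.dist_eq, sq_abs]
  rw [this]
  exact Finset.single_le_sum (f := fun j => dist (x j) (y j) ^ 2)
    (fun j _ => sq_nonneg _) (Finset.mem_univ i)

lemma sdist_nonneg {n : ℕ} (A B : Set (E n)) : 0 ≤ sdist A B :=
  Real.sInf_nonneg fun x hx => by
    obtain ⟨a, _, b, _, rfl⟩ := hx
    exact dist_nonneg

/-- if block indices differ by ≥ 3 in some coordinate, sets are far apart -/
lemma sdist_ge_of_far {n : ℕ} {c : ℤ} {b b' : Fin n → ℤ} {A B : Set (E n)}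
    (hA : A ⊆ (dQ n c b).set) (hB : B ⊆ (dQ n c b').set) (hAne : A.Nonempty)
    (hBne : B.Nonempty) (i : Fin n) (hfar : 3 ≤ |b' i - b i|) :
    2 * (2:ℝ)^c ≤ sdist A B := by
  apply le_csInf (hAne.image2 hBne)
  rintro d ⟨x, hx, y, hy, rfl⟩
  obtain ⟨hx1, hx2⟩ := hA hx i
  obtain ⟨hy1, hy2⟩ := hB hy i
  simp only [dQ_corner, dQ_side] at hx1 hx2 hy1 hy2
  have hpos : (0:ℝ) < 2^c := by positivity
  have habs : 2 * (2:ℝ)^c ≤ |x i - y i| := by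
    rcases le_or_gt (b i + 3) (b' i) with h | h
    · have hb : ((b i : ℝ)) + 3 ≤ (b' i : ℝ) := by exact_mod_cast h
      rw [abs_sub_comm, abs_of_nonneg (by nlinarith)]
      nlinarith
    · have h' : b' i + 3 ≤ b i := by
        rcases abs_cases (b' i - b i) with ⟨he, _⟩ | ⟨he, _⟩ <;> omega
      have hb : ((b' i : ℝ)) + 3 ≤ (b i : ℝ) := by exact_mod_cast h'
      rw [abs_of_nonneg (by nlinarith)]
      nlinarith
  calc 2 * (2:ℝ)^c ≤ |x i - y i| := habs
  _ ≤ dist x y := abs_coord_le_dist x y i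

-- ===== measure lemmas =====

lemma cube_subset_closedBall {n : ℕ} (Q : Cube n) :
    Q.set ⊆ Metric.closedBall Q.corner (Real.sqrt n * Q.side) := by
  intro x hx
  rw [Metric.mem_closedBall, EuclideanSpace.dist_eq]
  have hbd : ∀ i, dist (x i) (Q.corner i) ^ 2 ≤ Q.side ^ 2 := by
    intro i
    obtain ⟨h1, h2⟩ := hx i
    rw [Real.dist_eq, sq_abs]
    nlinarith [Q.side_pos]
  calc Real.sqrt (∑ i, dist (x i) (Q.corner i) ^ 2)
      ≤ Real.sqrt (∑ _i : Fin n, Q.side ^ 2) :=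
        Real.sqrt_le_sqrt (Finset.sum_le_sum fun i _ => hbd i)
    _ = Real.sqrt n * Q.side := by
        rw [Finset.sum_const, Finset.card_univ, Fintype.card_fin, nsmul_eq_mul,
          Real.sqrt_mul (by positivity), Real.sqrt_sq Q.side_pos.le]

lemma measurableSet_cube {n : ℕ} (Q : Cube n) : MeasurableSet Q.set := by
  have : Q.set = ⋂ i, (fun x : E n => x i) ⁻¹'
      (Set.Ico (Q.corner i) (Q.corner i + Q.side)) := by
    ext x
    simp [Cube.set, Set.mem_Ico]
  rw [this]
  refine MeasurableSet.iInter fun i => ?_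
  have hm : Measurable (fun x : E n => x i) :=
    (measurable_pi_apply i).comp (MeasurableEquiv.toLp 2 (Fin n → ℝ)).symm.measurable
  exact hm measurableSet_Ico

lemma integrableOn_cube {n : ℕ} {σ : E n → ℝ} (hσ : IsWeight σ) (Q : Cube n) :
    IntegrableOn σ Q.set := by
  exact (hσ.2.integrableOn_isCompact (isCompact_closedBall Q.corner _)).mono_set
    (cube_subset_closedBall Q)

lemma cInt_nonneg {n : ℕ} {σ : E n → ℝ} (hσ : IsWeight σ) (Q : Cube n) : 0 ≤ cInt σ Q :=
  setIntegral_nonneg (measurableSet_cube Q) fun x _ => hσ.1 x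

lemma ofReal_cInt {n : ℕ} {σ : E n → ℝ} (hσ : IsWeight σ) (Q : Cube n) :
    ENNReal.ofReal (cInt σ Q) = ∫⁻ x in Q.set, ENNReal.ofReal (σ x) :=
  ofReal_integral_eq_lintegral_ofReal (integrableOn_cube hσ Q)
    (Filter.Eventually.of_forall hσ.1)

lemma cInt_mono {n : ℕ} {σ : E n → ℝ} (hσ : IsWeight σ) {Q R : Cube n}
    (h : Q.set ⊆ R.set) : cInt σ Q ≤ cInt σ R :=
  setIntegral_mono_set (integrableOn_cube hσ R)
    (Filter.Eventually.of_forall hσ.1) (HasSubset.Subset.eventuallyLE h)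

/-- fiber additivity: scale-k cubes in a block -/
lemma tsum_cInt_blk_le {n : ℕ} {σ : E n → ℝ} (hσ : IsWeight σ) {k c : ℤ} (hkc : k ≤ c)
    (b : Fin n → ℤ) :
    ∑' m : Fin n → ℤ, (if blk (c - k).toNat m = b then ENNReal.ofReal (cInt σ (dQ n k m)) else 0)
      ≤ ENNReal.ofReal (cInt σ (dQ n c b)) := by
  set S : (Fin n → ℤ) → Set (E n) :=
    fun m => if blk (c - k).toNat m = b then (dQ n k m).set else ∅ with hS
  have hterm : ∀ m, (if blk (c - k).toNat m = b then ENNReal.ofReal (cInt σ (dQ n k m)) else 0)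
      = ∫⁻ x in S m, ENNReal.ofReal (σ x) := by
    intro m
    by_cases h : blk (c - k).toNat m = b <;> simp [hS, h, ofReal_cInt hσ]
  simp_rw [hterm]
  rw [← lintegral_iUnion (fun m => by
      by_cases h : blk (c - k).toNat m = b <;> simp [hS, h, measurableSet_cube])
    (fun m p hmp => by
      simp only [Function.onFun, hS]
      split
      · split
        · exact dQ_disjoint hmp
        · simp
      · simp)]
  rw [ofReal_cInt hσ]
  apply lintegral_mono_set
  refine Set.iUnion_subset fun m => ?_
  simp only [hS]
  split
  · rename_i h
    calc (dQ n k m).set ⊆ (dQ n c (blk (c - k).toNat m)).set := dQ_subset_blk hkc m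
      _ = (dQ n c b).set := by rw [h]
  · exact Set.empty_subset _

lemma cube_vol_pos {n : ℕ} (Q : Cube n) : 0 < Q.vol := pow_pos Q.side_pos n

lemma A2_on_cube {n : ℕ} {σ w : E n → ℝ} {A2 : ℝ} (hA2n : 0 ≤ A2)
    (hA2 : A2sq σ w ≤ ENNReal.ofReal (A2 ^ 2)) (P : Cube n) :
    cInt σ P * cInt w P ≤ A2 ^ 2 * P.vol ^ 2 := by
  simp only [A2sq] at hA2
  have h1 : ENNReal.ofReal ((cInt σ P / P.vol) * (cInt w P / P.vol))
      ≤ ENNReal.ofReal (A2 ^ 2) :=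
    le_trans (le_iSup (fun Q : Cube n => ENNReal.ofReal ((cInt σ Q / Q.vol) * (cInt w Q / Q.vol))) P) hA2
  have h2 : (cInt σ P / P.vol) * (cInt w P / P.vol) ≤ A2 ^ 2 :=
    (ENNReal.ofReal_le_ofReal_iff (by positivity)).mp h1
  have hv := cube_vol_pos P
  have h3 : (cInt σ P / P.vol) * (cInt w P / P.vol) = cInt σ P * cInt w P / P.vol ^ 2 := by
    rw [div_mul_div_comm, ← sq]
  rw [h3, div_le_iff₀ (by positivity)] at h2
  linarith [h2]

/-- the key block-pair weight bound -/
lemma block_pair_bound {n : ℕ} {σ w : E n → ℝ} {A2 : ℝ} (hσ : IsWeight σ) (hw : IsWeight w)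
    (hA2n : 0 ≤ A2) (hA2 : A2sq σ w ≤ ENNReal.ofReal (A2 ^ 2)) (c : ℤ) (b b' : Fin n → ℤ)
    (hτ : ∀ i, |b' i - b i| ≤ 2) :
    Real.sqrt (cInt σ (dQ n c b)) * Real.sqrt (cInt w (dQ n c b'))
      ≤ A2 * (3 * (2:ℝ)^c) ^ n := by
  have h2c : (0:ℝ) < 2^c := by positivity
  set P : Cube n := ⟨WithLp.toLp 2 (fun i => (2:ℝ)^c * (min (b i) (b' i)) : Fin n → ℝ), 3 * 2^c,
    by positivity⟩ with hP
  have hsub : ∀ (a : Fin n → ℤ), (∀ i, (min (b i) (b' i)) ≤ a i ∧ a i ≤ min (b i) (b' i) + 2) →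
      (dQ n c a).set ⊆ P.set := by
    intro a ha x hx i
    obtain ⟨h1, h2⟩ := hx i
    simp only [dQ_corner, dQ_side] at h1 h2
    obtain ⟨ha1, ha2⟩ := ha i
    have ha1R : ((min (b i) (b' i) : ℤ) : ℝ) ≤ (a i : ℝ) := by exact_mod_cast ha1
    have ha2R : ((a i) : ℝ) ≤ ((min (b i) (b' i) : ℤ) : ℝ) + 2 := by exact_mod_cast ha2
    constructor
    · show (2:ℝ)^c * ((min (b i) (b' i) : ℤ) : ℝ) ≤ x i
      nlinarith
    · show x i < (2:ℝ)^c * ((min (b i) (b' i) : ℤ) : ℝ) + 3 * 2^c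
      nlinarith
  have hsubb : (dQ n c b).set ⊆ P.set := hsub b fun i => by
    constructor
    · exact min_le_left _ _
    · have := hτ i; rcases abs_cases (b' i - b i) with ⟨h, _⟩ | ⟨h, _⟩ <;> omega
  have hsubb' : (dQ n c b').set ⊆ P.set := hsub b' fun i => by
    constructor
    · exact min_le_right _ _
    · have := hτ i; rcases abs_cases (b' i - b i) with ⟨h, _⟩ | ⟨h, _⟩ <;> omega
  have hm1 : cInt σ (dQ n c b) ≤ cInt σ P := cInt_mono hσ hsubb
  have hm2 : cInt w (dQ n c b') ≤ cInt w P := cInt_mono hw hsubb'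
  have hvol : P.vol = (3 * (2:ℝ)^c) ^ n := rfl
  calc Real.sqrt (cInt σ (dQ n c b)) * Real.sqrt (cInt w (dQ n c b'))
      = Real.sqrt (cInt σ (dQ n c b) * cInt w (dQ n c b')) :=
        (Real.sqrt_mul (cInt_nonneg hσ _) _).symm
    _ ≤ Real.sqrt (A2 ^ 2 * P.vol ^ 2) := by
        apply Real.sqrt_le_sqrt
        calc cInt σ (dQ n c b) * cInt w (dQ n c b') ≤ cInt σ P * cInt w P := by
              apply mul_le_mul hm1 hm2 (cInt_nonneg hw _) (cInt_nonneg hσ P)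
          _ ≤ A2 ^ 2 * P.vol ^ 2 := A2_on_cube hA2n hA2 P
    _ = A2 * P.vol := by
        rw [← mul_pow, Real.sqrt_sq (mul_nonneg hA2n (cube_vol_pos P).le)]
    _ = A2 * (3 * (2:ℝ)^c) ^ n := by rw [hvol]


-- ===== core block machinery =====

def uu (n : ℕ) (σ : E n → ℝ) (xf : Cube n → ℝ) (k : ℤ) (m : Fin n → ℤ) : ℝ≥0∞ :=
  ENNReal.ofReal (Real.sqrt (cInt σ (dQ n k m)) * xf (dQ n k m))

def SX (n : ℕ) (xf : Cube n → ℝ) (k : ℤ) : ℝ≥0∞ :=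
  ∑' m : Fin n → ℤ, ENNReal.ofReal (xf (dQ n k m) ^ 2)

def SXb (n : ℕ) (xf : Cube n → ℝ) (k c : ℤ) (b : Fin n → ℤ) : ℝ≥0∞ :=
  ∑' m : Fin n → ℤ, (if b = blk (c - k).toNat m then ENNReal.ofReal (xf (dQ n k m) ^ 2) else 0)

def Ub (n : ℕ) (σ : E n → ℝ) (xf : Cube n → ℝ) (k c : ℤ) (b : Fin n → ℤ) : ℝ≥0∞ :=
  ∑' m : Fin n → ℤ, (if b = blk (c - k).toNat m then uu n σ xf k m else 0)

lemma tsum_SXb (n : ℕ) (xf : Cube n → ℝ) (k c : ℤ) :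
    ∑' b : Fin n → ℤ, SXb n xf k c b = SX n xf k := by
  simp only [SXb, SX]
  rw [ENNReal.tsum_comm]
  exact tsum_congr fun m => tsum_ite_eq _ _

lemma Ub_le (n : ℕ) {σ : E n → ℝ} (hσ : IsWeight σ) {xf : Cube n → ℝ}
    (hx : ∀ Q, 0 ≤ xf Q) {k c : ℤ} (hk : k ≤ c) (b : Fin n → ℤ) :
    Ub n σ xf k c b ≤ ENNReal.ofReal (Real.sqrt (cInt σ (dQ n c b)))
      * (SXb n xf k c b) ^ (2⁻¹ : ℝ) := by
  have hsplit : ∀ m, (if b = blk (c - k).toNat m then uu n σ xf k m else 0)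
      = (if b = blk (c - k).toNat m then ENNReal.ofReal (Real.sqrt (cInt σ (dQ n k m))) else 0)
        * (if b = blk (c - k).toNat m then ENNReal.ofReal (xf (dQ n k m)) else 0) := by
    intro m
    by_cases h : b = blk (c - k).toNat m <;>
      simp [h, uu, ENNReal.ofReal_mul (Real.sqrt_nonneg _)]
  rw [Ub]
  simp_rw [hsplit]
  refine le_trans (ecs _ _) ?_
  have hsq1 : ∀ m, ((if b = blk (c - k).toNat m then ENNReal.ofReal (Real.sqrt (cInt σ (dQ n k m))) else 0)) ^ 2
      = (if b = blk (c - k).toNat m then ENNReal.ofReal (cInt σ (dQ n k m)) else 0) := by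
    intro m
    by_cases h : b = blk (c - k).toNat m <;>
      simp [h, ← ENNReal.ofReal_pow (Real.sqrt_nonneg _), Real.sq_sqrt (cInt_nonneg hσ _)]
  have hsq2 : ∀ m, ((if b = blk (c - k).toNat m then ENNReal.ofReal (xf (dQ n k m)) else 0)) ^ 2
      = (if b = blk (c - k).toNat m then ENNReal.ofReal (xf (dQ n k m) ^ 2) else 0) := by
    intro m
    by_cases h : b = blk (c - k).toNat m <;> simp [h, ← ENNReal.ofReal_pow (hx _)]
  simp_rw [hsq1, hsq2]
  gcongr
  · -- sum of cInt over fiber ≤ cInt of block, then take sqrt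
    have h1 : ∑' m : Fin n → ℤ, (if b = blk (c - k).toNat m then ENNReal.ofReal (cInt σ (dQ n k m)) else 0)
        ≤ ENNReal.ofReal (cInt σ (dQ n c b)) := by
      refine le_trans (le_of_eq (tsum_congr fun m => ?_)) (tsum_cInt_blk_le hσ hk b)
      exact if_congr eq_comm rfl rfl
    calc (∑' m : Fin n → ℤ, (if b = blk (c - k).toNat m then ENNReal.ofReal (cInt σ (dQ n k m)) else 0)) ^ (2⁻¹:ℝ)
        ≤ (ENNReal.ofReal (cInt σ (dQ n c b))) ^ (2⁻¹:ℝ) := ENNReal.rpow_le_rpow h1 (by norm_num)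
      _ = ENNReal.ofReal (Real.sqrt (cInt σ (dQ n c b))) := by
          rw [ENNReal.ofReal_rpow_of_nonneg (cInt_nonneg hσ _) (by norm_num),
            Real.sqrt_eq_rpow]
          norm_num
  · exact le_of_eq rfl

lemma core {n : ℕ} {σ w : E n → ℝ} {A2 : ℝ} {xf yf : Cube n → ℝ}
    (hσ : IsWeight σ) (hw : IsWeight w) (hA2n : 0 ≤ A2)
    (hA2 : A2sq σ w ≤ ENNReal.ofReal (A2 ^ 2))
    (hx : ∀ Q, 0 ≤ xf Q) (hy : ∀ Q, 0 ≤ yf Q)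
    (k l c : ℤ) (hk : k ≤ c) (hl : l ≤ c) (τ : Fin n → ℤ) (hτ : ∀ i, |τ i| ≤ 2) :
    (∑' m : Fin n → ℤ, ∑' p : Fin n → ℤ,
      (if blk (c - k).toNat m + τ = blk (c - l).toNat p
        then uu n σ xf k m * uu n w yf l p else 0))
      ≤ ENNReal.ofReal (A2 * (3 * (2:ℝ)^c) ^ n)
          * (SX n xf k) ^ (2⁻¹ : ℝ) * (SX n yf l) ^ (2⁻¹ : ℝ) := by
  -- Step 1: inner sum gives V
  have step1 : ∀ m, (∑' p : Fin n → ℤ,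
      (if blk (c - k).toNat m + τ = blk (c - l).toNat p
        then uu n σ xf k m * uu n w yf l p else 0))
      = uu n σ xf k m * Ub n w yf l c (blk (c - k).toNat m + τ) := by
    intro m
    rw [Ub, ← ENNReal.tsum_mul_left]
    refine tsum_congr fun p => ?_
    by_cases h : blk (c - k).toNat m + τ = blk (c - l).toNat p <;> simp [h]
  simp_rw [step1]
  -- Step 2: regroup by blocks
  have step2 : ∑' m : Fin n → ℤ, uu n σ xf k m * Ub n w yf l c (blk (c - k).toNat m + τ)
      = ∑' b : Fin n → ℤ, Ub n σ xf k c b * Ub n w yf l c (b + τ) := by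
    symm
    calc ∑' b : Fin n → ℤ, Ub n σ xf k c b * Ub n w yf l c (b + τ)
        = ∑' b : Fin n → ℤ, ∑' m : Fin n → ℤ,
            (if b = blk (c - k).toNat m then uu n σ xf k m * Ub n w yf l c (b + τ) else 0) := by
          refine tsum_congr fun b => ?_
          rw [Ub, ← ENNReal.tsum_mul_right]
          refine tsum_congr fun m => ?_
          by_cases h : b = blk (c - k).toNat m <;> simp [h]
      _ = ∑' m : Fin n → ℤ, ∑' b : Fin n → ℤ,
            (if b = blk (c - k).toNat m then uu n σ xf k m * Ub n w yf l c (b + τ) else 0) :=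
          ENNReal.tsum_comm
      _ = ∑' m : Fin n → ℤ, uu n σ xf k m * Ub n w yf l c (blk (c - k).toNat m + τ) := by
          refine tsum_congr fun m => ?_
          have hcong : ∀ b, (if b = blk (c - k).toNat m
              then uu n σ xf k m * Ub n w yf l c (b + τ) else 0)
              = (if b = blk (c - k).toNat m
                then uu n σ xf k m * Ub n w yf l c (blk (c - k).toNat m + τ) else 0) := by
            intro b; by_cases h : b = blk (c - k).toNat m <;> simp [h]
          simp_rw [hcong]
          exact tsum_ite_eq _ _
  rw [step2]
  -- Step 3: bound each block pair
  have step3 : ∀ b : Fin n → ℤ, Ub n σ xf k c b * Ub n w yf l c (b + τ)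
      ≤ ENNReal.ofReal (A2 * (3 * (2:ℝ)^c) ^ n)
        * ((SXb n xf k c b) ^ (2⁻¹:ℝ) * (SXb n yf l c (b + τ)) ^ (2⁻¹:ℝ)) := by
    intro b
    calc Ub n σ xf k c b * Ub n w yf l c (b + τ)
        ≤ (ENNReal.ofReal (Real.sqrt (cInt σ (dQ n c b))) * (SXb n xf k c b) ^ (2⁻¹:ℝ))
          * (ENNReal.ofReal (Real.sqrt (cInt w (dQ n c (b + τ)))) * (SXb n yf l c (b + τ)) ^ (2⁻¹:ℝ)) :=
          mul_le_mul' (Ub_le n hσ hx hk b) (Ub_le n hw hy hl (b + τ))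
      _ = (ENNReal.ofReal (Real.sqrt (cInt σ (dQ n c b)) * Real.sqrt (cInt w (dQ n c (b + τ)))))
          * ((SXb n xf k c b) ^ (2⁻¹:ℝ) * (SXb n yf l c (b + τ)) ^ (2⁻¹:ℝ)) := by
          rw [ENNReal.ofReal_mul (Real.sqrt_nonneg _)]; ring
      _ ≤ ENNReal.ofReal (A2 * (3 * (2:ℝ)^c) ^ n)
          * ((SXb n xf k c b) ^ (2⁻¹:ℝ) * (SXb n yf l c (b + τ)) ^ (2⁻¹:ℝ)) := by
          refine mul_le_mul_left (ENNReal.ofReal_le_ofReal ?_) _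
          refine block_pair_bound hσ hw hA2n hA2 c b (b + τ) fun i => ?_
          have h2 : (b + τ) i - b i = τ i := by simp
          rw [h2]
          exact hτ i
  -- Step 4: Cauchy–Schwarz over blocks
  calc ∑' b : Fin n → ℤ, Ub n σ xf k c b * Ub n w yf l c (b + τ)
      ≤ ∑' b : Fin n → ℤ, ENNReal.ofReal (A2 * (3 * (2:ℝ)^c) ^ n)
        * ((SXb n xf k c b) ^ (2⁻¹:ℝ) * (SXb n yf l c (b + τ)) ^ (2⁻¹:ℝ)) :=
        ENNReal.tsum_le_tsum step3
    _ = ENNReal.ofReal (A2 * (3 * (2:ℝ)^c) ^ n)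
        * ∑' b : Fin n → ℤ, ((SXb n xf k c b) ^ (2⁻¹:ℝ) * (SXb n yf l c (b + τ)) ^ (2⁻¹:ℝ)) :=
        ENNReal.tsum_mul_left
    _ ≤ ENNReal.ofReal (A2 * (3 * (2:ℝ)^c) ^ n)
        * ((∑' b : Fin n → ℤ, SXb n xf k c b) ^ (2⁻¹:ℝ)
          * (∑' b : Fin n → ℤ, SXb n yf l c (b + τ)) ^ (2⁻¹:ℝ)) := by
        refine mul_le_mul_right ?_ _
        refine le_trans (ecs _ _) ?_
        simp_rw [rpow_half_sq]
        exact le_rfl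
    _ = ENNReal.ofReal (A2 * (3 * (2:ℝ)^c) ^ n)
        * ((SX n xf k) ^ (2⁻¹:ℝ) * (SX n yf l) ^ (2⁻¹:ℝ)) := by
        congr 2
        · rw [tsum_SXb]
        · rw [← tsum_SXb n yf l c]
          congr 1
          exact ((Equiv.addRight τ).tsum_eq (fun b => SXb n yf l c b))
    _ = ENNReal.ofReal (A2 * (3 * (2:ℝ)^c) ^ n)
        * (SX n xf k) ^ (2⁻¹:ℝ) * (SX n yf l) ^ (2⁻¹:ℝ) := by ring

-- ===== pointwise cover by scales =====

def T5 (n : ℕ) : Finset (Fin n → ℤ) := Fintype.piFinset fun _ => Finset.Icc (-2) 2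

def Dd (n : ℕ) (k : ℤ) (m : Fin n → ℤ) (l : ℤ) (p : Fin n → ℤ) : ℝ :=
  (2:ℝ)^k + (2:ℝ)^l + sdist (dQ n k m).set (dQ n l p).set

def rT (n : ℕ) (α : ℝ) (σ w : E n → ℝ) (xf yf : Cube n → ℝ) (k : ℤ) (m : Fin n → ℤ)
    (l : ℤ) (p : Fin n → ℤ) : ℝ :=
  ((2:ℝ)^k) ^ (α/2) * ((2:ℝ)^l) ^ (α/2) / (Dd n k m l p) ^ ((n:ℝ)+α)
    * Real.sqrt (cInt σ (dQ n k m)) * Real.sqrt (cInt w (dQ n l p))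
    * xf (dQ n k m) * yf (dQ n l p)

lemma pointwise_cover {n : ℕ} {α : ℝ} {σ w : E n → ℝ} {xf yf : Cube n → ℝ}
    (hσ : IsWeight σ) (hw : IsWeight w) (hα : 0 < α) (hn : 0 ≤ (n:ℝ))
    (hx : ∀ Q, 0 ≤ xf Q) (hy : ∀ Q, 0 ≤ yf Q)
    (k : ℤ) (m : Fin n → ℤ) (l : ℤ) (p : Fin n → ℤ) :
    ENNReal.ofReal (rT n α σ w xf yf k m l p)
      ≤ ∑' c : ℤ, (if k ⊔ l ≤ c then
          ∑ τ ∈ T5 n, (if blk (c - k).toNat m + τ = blk (c - l).toNat p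
            then ENNReal.ofReal (((2:ℝ)^k) ^ (α/2) * ((2:ℝ)^l) ^ (α/2) / ((2:ℝ)^c) ^ ((n:ℝ)+α))
              * (uu n σ xf k m * uu n w yf l p) else 0) else 0) := by
  have h2k : (0:ℝ) < 2^k := by positivity
  have h2l : (0:ℝ) < 2^l := by positivity
  have hsd := sdist_nonneg (dQ n k m).set (dQ n l p).set
  have hD0 : 0 < Dd n k m l p := by rw [Dd]; linarith
  set D := Dd n k m l p with hDdef
  set c₀ := Int.log 2 D with hc₀def
  have h1 : (2:ℝ)^c₀ ≤ D := by
    have h := Int.zpow_log_le_self (b := 2) (R := ℝ) (by norm_num) hD0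
    norm_num at h
    exact h
  have h2 : D < 2 * (2:ℝ)^c₀ := by
    have h := Int.lt_zpow_succ_log_self (b := 2) (R := ℝ) (by norm_num) D
    norm_num at h
    calc D < (2:ℝ)^(c₀ + 1) := h
      _ = 2 * (2:ℝ)^c₀ := by rw [zpow_add_one₀ (by norm_num)]; ring
  have hc₀ : k ⊔ l ≤ c₀ := by
    have hmax : (2:ℝ)^(k ⊔ l) ≤ D := by
      rcases le_total k l with h | h
      · rw [sup_of_le_right h, hDdef, Dd]; linarith
      · rw [sup_of_le_left h, hDdef, Dd]; linarith
    calc k ⊔ l = Int.log 2 ((2:ℝ)^(k ⊔ l)) := by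
          rw [show ((2:ℝ)^(k ⊔ l)) = ((2:ℕ):ℝ)^(k ⊔ l) by norm_num,
            Int.log_zpow (by norm_num)]
      _ ≤ c₀ := Int.log_mono_right (by positivity) hmax
  have hkc : k ≤ c₀ := le_trans le_sup_left hc₀
  have hlc : l ≤ c₀ := le_trans le_sup_right hc₀
  refine le_trans ?_ (ENNReal.le_tsum c₀)
  rw [if_pos hc₀]
  set τ₀ : Fin n → ℤ := blk (c₀ - l).toNat p - blk (c₀ - k).toNat m with hτ₀def
  have hτmem : τ₀ ∈ T5 n := by
    rw [T5, Fintype.mem_piFinset]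
    intro i
    rw [Finset.mem_Icc]
    by_contra hcon
    have habs : 3 ≤ |blk (c₀ - l).toNat p i - blk (c₀ - k).toNat m i| := by
      simp only [hτ₀def, Pi.sub_apply] at hcon
      rcases abs_cases (blk (c₀ - l).toNat p i - blk (c₀ - k).toNat m i) with ⟨h, _⟩ | ⟨h, _⟩ <;>
        omega
    have hfar := sdist_ge_of_far (dQ_subset_blk hkc m) (dQ_subset_blk hlc p)
      (dQ_nonempty n k m) (dQ_nonempty n l p) i habs
    have : D < 2 * (2:ℝ)^c₀ := h2
    rw [hDdef, Dd] at this
    linarith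
  refine le_trans ?_ (Finset.single_le_sum (fun τ _ => zero_le) hτmem)
  rw [if_pos (by simp [hτ₀def])]
  rw [uu, uu, ← ENNReal.ofReal_mul (mul_nonneg (Real.sqrt_nonneg _) (hx _)),
    ← ENNReal.ofReal_mul (by positivity)]
  apply ENNReal.ofReal_le_ofReal
  have hhead : ((2:ℝ)^k) ^ (α/2) * ((2:ℝ)^l) ^ (α/2) / D ^ ((n:ℝ)+α)
      ≤ ((2:ℝ)^k) ^ (α/2) * ((2:ℝ)^l) ^ (α/2) / ((2:ℝ)^c₀) ^ ((n:ℝ)+α) := by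
    apply div_le_div_of_nonneg_left (by positivity) (by positivity)
    exact Real.rpow_le_rpow (by positivity) h1 (by linarith)
  have hnn : 0 ≤ ((2:ℝ)^k) ^ (α/2) * ((2:ℝ)^l) ^ (α/2) / ((2:ℝ)^c₀) ^ ((n:ℝ)+α) := by positivity
  calc rT n α σ w xf yf k m l p
      = (((2:ℝ)^k) ^ (α/2) * ((2:ℝ)^l) ^ (α/2) / D ^ ((n:ℝ)+α))
        * (Real.sqrt (cInt σ (dQ n k m)) * xf (dQ n k m)
          * (Real.sqrt (cInt w (dQ n l p)) * yf (dQ n l p))) := by rw [rT]; ring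
    _ ≤ (((2:ℝ)^k) ^ (α/2) * ((2:ℝ)^l) ^ (α/2) / ((2:ℝ)^c₀) ^ ((n:ℝ)+α))
        * (Real.sqrt (cInt σ (dQ n k m)) * xf (dQ n k m)
          * (Real.sqrt (cInt w (dQ n l p)) * yf (dQ n l p))) := by
        apply mul_le_mul_of_nonneg_right hhead
        have := hx (dQ n k m); have := hy (dQ n l p)
        positivity

-- ===== rpow algebra =====

lemma zpow_to_rpow (c : ℤ) : (2:ℝ)^c = (2:ℝ) ^ ((c:ℝ)) := by
  rw [Real.rpow_intCast]

lemma Hconst {α : ℝ} (n : ℕ) (A2 : ℝ) (k l c : ℤ) :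
    (((2:ℝ)^k) ^ (α/2) * ((2:ℝ)^l) ^ (α/2) / ((2:ℝ)^c) ^ ((n:ℝ)+α)) * (A2 * (3 * (2:ℝ)^c) ^ n)
      = A2 * 3^n * (((2:ℝ)^k) ^ (α/2) * ((2:ℝ)^l) ^ (α/2)) * (2:ℝ) ^ (-(c:ℝ)*α) := by
  have h1 : ((2:ℝ)^c) ^ ((n:ℝ)+α) = (2:ℝ) ^ ((c:ℝ)*((n:ℝ)+α)) := by
    rw [zpow_to_rpow, ← Real.rpow_mul (by norm_num)]
  have h2 : ((2:ℝ)^c) ^ (n:ℕ) = (2:ℝ) ^ ((c:ℝ)*(n:ℝ)) := by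
    rw [zpow_to_rpow, ← Real.rpow_natCast ((2:ℝ) ^ ((c:ℝ))) n, ← Real.rpow_mul (by norm_num)]
  have h3 : (3 * (2:ℝ)^c) ^ n = 3^n * (2:ℝ) ^ ((c:ℝ)*(n:ℝ)) := by
    rw [mul_pow, h2]
  rw [h1, h3, div_eq_mul_inv, ← Real.rpow_neg (by norm_num : (0:ℝ) ≤ 2)]
  have h6 : (2:ℝ) ^ (-((c:ℝ)*((n:ℝ)+α))) * (2:ℝ) ^ ((c:ℝ)*(n:ℝ)) = (2:ℝ) ^ (-(c:ℝ)*α) := by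
    rw [← Real.rpow_add (by norm_num)]
    congr 1
    ring
  calc ((2:ℝ)^k) ^ (α/2) * ((2:ℝ)^l) ^ (α/2) * (2:ℝ) ^ (-((c:ℝ)*((n:ℝ)+α)))
        * (A2 * (3^n * (2:ℝ) ^ ((c:ℝ)*(n:ℝ))))
      = A2 * 3^n * (((2:ℝ)^k) ^ (α/2) * ((2:ℝ)^l) ^ (α/2))
        * ((2:ℝ) ^ (-((c:ℝ)*((n:ℝ)+α))) * (2:ℝ) ^ ((c:ℝ)*(n:ℝ))) := by ring
    _ = A2 * 3^n * (((2:ℝ)^k) ^ (α/2) * ((2:ℝ)^l) ^ (α/2)) * (2:ℝ) ^ (-(c:ℝ)*α) := by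
        rw [h6]

lemma kern_ident {α : ℝ} (k l : ℤ) :
    (((2:ℝ)^k) ^ (α/2) * ((2:ℝ)^l) ^ (α/2)) * (2:ℝ) ^ (-((k ⊔ l : ℤ):ℝ)*α)
      = (2:ℝ) ^ (-((|k - l| : ℤ):ℝ)*(α/2)) := by
  have hk : ((2:ℝ)^k) ^ (α/2) = (2:ℝ) ^ ((k:ℝ)*(α/2)) := by
    rw [zpow_to_rpow, ← Real.rpow_mul (by norm_num)]
  have hl : ((2:ℝ)^l) ^ (α/2) = (2:ℝ) ^ ((l:ℝ)*(α/2)) := by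
    rw [zpow_to_rpow, ← Real.rpow_mul (by norm_num)]
  rw [hk, hl, ← Real.rpow_add (by norm_num), ← Real.rpow_add (by norm_num)]
  congr 1
  rcases le_total k l with h | h
  · rw [sup_of_le_right h, abs_of_nonpos (by omega : k - l ≤ 0)]
    push_cast
    ring
  · rw [sup_of_le_left h, abs_of_nonneg (by omega : 0 ≤ k - l)]
    push_cast
    ring

lemma T5_card (n : ℕ) : (T5 n).card = 5 ^ n := by
  rw [T5, Fintype.card_piFinset]
  simp [Int.card_Icc]

lemma mid {n : ℕ} {α : ℝ} {σ w : E n → ℝ} {A2 : ℝ} {xf yf : Cube n → ℝ}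
    (hσ : IsWeight σ) (hw : IsWeight w) (hA2n : 0 ≤ A2)
    (hA2 : A2sq σ w ≤ ENNReal.ofReal (A2 ^ 2)) (hα : 0 < α)
    (hx : ∀ Q, 0 ≤ xf Q) (hy : ∀ Q, 0 ≤ yf Q) (k l : ℤ) :
    ∑' m : Fin n → ℤ, ∑' p : Fin n → ℤ, ENNReal.ofReal (rT n α σ w xf yf k m l p)
      ≤ ENNReal.ofReal (A2 * 3^n * 5^n * (1 - (2:ℝ)^(-α))⁻¹)
        * ENNReal.ofReal ((2:ℝ) ^ (-((|k - l| : ℤ):ℝ)*(α/2)))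
        * ((SX n xf k) ^ (2⁻¹:ℝ) * (SX n yf l) ^ (2⁻¹:ℝ)) := by
  set st : ℝ := ((2:ℝ)^k) ^ (α/2) * ((2:ℝ)^l) ^ (α/2) with hst
  have hst0 : 0 ≤ st := by rw [hst]; positivity
  set SS : ℝ≥0∞ := (SX n xf k) ^ (2⁻¹:ℝ) * (SX n yf l) ^ (2⁻¹:ℝ) with hSS
  set F : ℤ → (Fin n → ℤ) → (Fin n → ℤ) → ℝ≥0∞ := fun c m p =>
    (if k ⊔ l ≤ c then
      ∑ τ ∈ T5 n, (if blk (c - k).toNat m + τ = blk (c - l).toNat p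
        then ENNReal.ofReal (((2:ℝ)^k) ^ (α/2) * ((2:ℝ)^l) ^ (α/2) / ((2:ℝ)^c) ^ ((n:ℝ)+α))
          * (uu n σ xf k m * uu n w yf l p) else 0) else 0) with hF
  have step1 : (∑' m : Fin n → ℤ, ∑' p : Fin n → ℤ,
      ENNReal.ofReal (rT n α σ w xf yf k m l p))
      ≤ ∑' c : ℤ, ∑' m : Fin n → ℤ, ∑' p : Fin n → ℤ, F c m p := by
    calc ∑' m : Fin n → ℤ, ∑' p : Fin n → ℤ, ENNReal.ofReal (rT n α σ w xf yf k m l p)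
        ≤ ∑' m : Fin n → ℤ, ∑' p : Fin n → ℤ, ∑' c : ℤ, F c m p :=
          ENNReal.tsum_le_tsum fun m => ENNReal.tsum_le_tsum fun p =>
            pointwise_cover hσ hw hα (Nat.cast_nonneg n) hx hy k m l p
      _ = ∑' m : Fin n → ℤ, ∑' c : ℤ, ∑' p : Fin n → ℤ, F c m p :=
          tsum_congr fun m => ENNReal.tsum_comm
      _ = ∑' c : ℤ, ∑' m : Fin n → ℤ, ∑' p : Fin n → ℤ, F c m p := ENNReal.tsum_comm
  refine le_trans step1 ?_
  have step2 : ∀ c : ℤ, (∑' m : Fin n → ℤ, ∑' p : Fin n → ℤ, F c m p)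
      ≤ (ENNReal.ofReal (A2 * 3^n * 5^n * st)
          * (if k ⊔ l ≤ c then ENNReal.ofReal ((2:ℝ)^(-(c:ℝ)*α)) else 0)) * SS := by
    intro c
    by_cases hc : k ⊔ l ≤ c
    · have hkc : k ≤ c := le_trans le_sup_left hc
      have hlc : l ≤ c := le_trans le_sup_right hc
      simp only [hF, if_pos hc]
      have hswap : (∑' m : Fin n → ℤ, ∑' p : Fin n → ℤ,
          ∑ τ ∈ T5 n, (if blk (c - k).toNat m + τ = blk (c - l).toNat p
            then ENNReal.ofReal (((2:ℝ)^k) ^ (α/2) * ((2:ℝ)^l) ^ (α/2) / ((2:ℝ)^c) ^ ((n:ℝ)+α))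
              * (uu n σ xf k m * uu n w yf l p) else 0))
          = ∑ τ ∈ T5 n, ∑' m : Fin n → ℤ, ∑' p : Fin n → ℤ,
            (if blk (c - k).toNat m + τ = blk (c - l).toNat p
              then ENNReal.ofReal (((2:ℝ)^k) ^ (α/2) * ((2:ℝ)^l) ^ (α/2) / ((2:ℝ)^c) ^ ((n:ℝ)+α))
                * (uu n σ xf k m * uu n w yf l p) else 0) := by
        rw [← Summable.tsum_finsetSum (fun τ _ => ENNReal.summable)]
        exact tsum_congr fun m => Summable.tsum_finsetSum (fun τ _ => ENNReal.summable)
      rw [hswap]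
      have hbnd : ∀ τ ∈ T5 n, (∑' m : Fin n → ℤ, ∑' p : Fin n → ℤ,
          (if blk (c - k).toNat m + τ = blk (c - l).toNat p
            then ENNReal.ofReal (((2:ℝ)^k) ^ (α/2) * ((2:ℝ)^l) ^ (α/2) / ((2:ℝ)^c) ^ ((n:ℝ)+α))
              * (uu n σ xf k m * uu n w yf l p) else 0))
          ≤ ENNReal.ofReal (st / ((2:ℝ)^c) ^ ((n:ℝ)+α))
            * (ENNReal.ofReal (A2 * (3 * (2:ℝ)^c) ^ n) * (SX n xf k) ^ (2⁻¹:ℝ)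
              * (SX n yf l) ^ (2⁻¹:ℝ)) := by
        intro τ hτ
        have hτ2 : ∀ i, |τ i| ≤ 2 := by
          intro i
          have := (Fintype.mem_piFinset.mp hτ) i
          rw [Finset.mem_Icc] at this
          rw [abs_le]
          exact this
        have hpull : ∀ (m p : Fin n → ℤ), (if blk (c - k).toNat m + τ = blk (c - l).toNat p
            then ENNReal.ofReal (((2:ℝ)^k) ^ (α/2) * ((2:ℝ)^l) ^ (α/2) / ((2:ℝ)^c) ^ ((n:ℝ)+α))
              * (uu n σ xf k m * uu n w yf l p) else 0)
            = ENNReal.ofReal (st / ((2:ℝ)^c) ^ ((n:ℝ)+α))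
              * (if blk (c - k).toNat m + τ = blk (c - l).toNat p
                then uu n σ xf k m * uu n w yf l p else 0) := by
          intro m p
          by_cases h : blk (c - k).toNat m + τ = blk (c - l).toNat p <;> simp [h, hst]
        simp_rw [hpull, ENNReal.tsum_mul_left]
        exact mul_le_mul_right (by
          have := core hσ hw hA2n hA2 hx hy k l c hkc hlc τ hτ2
          exact this) _
      calc (∑ τ ∈ T5 n, ∑' m : Fin n → ℤ, ∑' p : Fin n → ℤ,
          (if blk (c - k).toNat m + τ = blk (c - l).toNat p
            then ENNReal.ofReal (((2:ℝ)^k) ^ (α/2) * ((2:ℝ)^l) ^ (α/2) / ((2:ℝ)^c) ^ ((n:ℝ)+α))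
              * (uu n σ xf k m * uu n w yf l p) else 0))
          ≤ (T5 n).card • (ENNReal.ofReal (st / ((2:ℝ)^c) ^ ((n:ℝ)+α))
            * (ENNReal.ofReal (A2 * (3 * (2:ℝ)^c) ^ n) * (SX n xf k) ^ (2⁻¹:ℝ)
              * (SX n yf l) ^ (2⁻¹:ℝ))) := Finset.sum_le_card_nsmul _ _ _ hbnd
        _ = (ENNReal.ofReal (A2 * 3^n * 5^n * st)
            * ENNReal.ofReal ((2:ℝ)^(-(c:ℝ)*α))) * SS := by
            have hreal : (5:ℝ)^n * ((st / ((2:ℝ)^c)^((n:ℝ)+α)) * (A2 * (3*(2:ℝ)^c)^n))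
                = (A2 * 3^n * 5^n * st) * (2:ℝ)^(-(c:ℝ)*α) := by
              rw [hst, Hconst n A2 k l c]
              ring
            have hcomb : (↑(5^n : ℕ) : ℝ≥0∞) * (ENNReal.ofReal (st / ((2:ℝ)^c)^((n:ℝ)+α))
                * ENNReal.ofReal (A2 * (3 * (2:ℝ)^c)^n))
                = ENNReal.ofReal ((5:ℝ)^n * ((st / ((2:ℝ)^c)^((n:ℝ)+α))
                  * (A2 * (3 * (2:ℝ)^c)^n))) := by
              rw [← ENNReal.ofReal_natCast (5^n),
                ← ENNReal.ofReal_mul (div_nonneg hst0 (by positivity)),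
                ← ENNReal.ofReal_mul (Nat.cast_nonneg _)]
              congr 1
              push_cast
              ring
            calc (T5 n).card • (ENNReal.ofReal (st / ((2:ℝ)^c) ^ ((n:ℝ)+α))
                * (ENNReal.ofReal (A2 * (3 * (2:ℝ)^c) ^ n) * (SX n xf k) ^ (2⁻¹:ℝ)
                  * (SX n yf l) ^ (2⁻¹:ℝ)))
                = ((↑(5^n : ℕ) : ℝ≥0∞) * (ENNReal.ofReal (st / ((2:ℝ)^c)^((n:ℝ)+α))
                    * ENNReal.ofReal (A2 * (3 * (2:ℝ)^c)^n))) * SS := by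
                  rw [nsmul_eq_mul, T5_card, hSS]
                  ring
              _ = ENNReal.ofReal ((A2 * 3^n * 5^n * st) * (2:ℝ)^(-(c:ℝ)*α)) * SS := by
                  rw [hcomb, hreal]
              _ = (ENNReal.ofReal (A2 * 3^n * 5^n * st)
                  * ENNReal.ofReal ((2:ℝ)^(-(c:ℝ)*α))) * SS := by
                  rw [ENNReal.ofReal_mul (mul_nonneg (mul_nonneg (mul_nonneg hA2n
                    (by positivity)) (by positivity)) hst0)]
    · simp only [hF, if_neg hc]
      simp
  refine le_trans (ENNReal.tsum_le_tsum step2) ?_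
  rw [ENNReal.tsum_mul_right, ENNReal.tsum_mul_left]
  refine mul_le_mul_left ?_ SS
  have hone : (0:ℝ) ≤ (1 - (2:ℝ)^(-α))⁻¹ :=
    inv_nonneg.mpr (by linarith [two_rpow_neg_lt_one hα])
  calc ENNReal.ofReal (A2 * 3^n * 5^n * st)
      * (∑' c : ℤ, (if k ⊔ l ≤ c then ENNReal.ofReal ((2:ℝ)^(-(c:ℝ)*α)) else 0))
      ≤ ENNReal.ofReal (A2 * 3^n * 5^n * st)
        * ENNReal.ofReal ((2:ℝ)^(-((k ⊔ l : ℤ):ℝ)*α) * (1 - (2:ℝ)^(-α))⁻¹) :=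
        mul_le_mul_right (geo1 α hα (k ⊔ l)) _
    _ = ENNReal.ofReal (A2 * 3^n * 5^n * (1 - (2:ℝ)^(-α))⁻¹)
        * ENNReal.ofReal ((2:ℝ) ^ (-((|k - l| : ℤ):ℝ)*(α/2))) := by
        rw [← ENNReal.ofReal_mul (mul_nonneg (mul_nonneg (mul_nonneg hA2n
            (by positivity)) (by positivity)) hst0),
          ← ENNReal.ofReal_mul (mul_nonneg (mul_nonneg (mul_nonneg hA2n
            (by positivity)) (by positivity)) hone)]
        congr 1
        rw [← kern_ident (α := α) k l, ← hst]
        ring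

lemma sq_rpow_half (x : ℝ≥0∞) : (x ^ 2) ^ (2⁻¹ : ℝ) = x := by
  rw [← ENNReal.rpow_natCast x 2, ← ENNReal.rpow_mul]
  norm_num

lemma schur {n : ℕ} {α : ℝ} (hα : 0 < α) (xf yf : Cube n → ℝ) :
    ∑' k : ℤ, ∑' l : ℤ, ENNReal.ofReal ((2:ℝ) ^ (-((|k - l| : ℤ):ℝ)*(α/2)))
        * ((SX n xf k) ^ (2⁻¹:ℝ) * (SX n yf l) ^ (2⁻¹:ℝ))
      ≤ ENNReal.ofReal (2 * (1 - (2:ℝ)^(-(α/2)))⁻¹)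
        * ((∑' k : ℤ, SX n xf k) ^ (2⁻¹:ℝ) * (∑' l : ℤ, SX n yf l) ^ (2⁻¹:ℝ)) := by
  have hα2 : 0 < α/2 := by linarith
  set S2 : ℝ := 2 * (1 - (2:ℝ)^(-(α/2)))⁻¹ with hS2
  set f : ℤ × ℤ → ℝ≥0∞ := fun z =>
    ENNReal.ofReal ((2:ℝ) ^ (-((|z.1 - z.2| : ℤ):ℝ)*(α/4))) * (SX n xf z.1) ^ (2⁻¹:ℝ) with hf
  set g : ℤ × ℤ → ℝ≥0∞ := fun z =>
    ENNReal.ofReal ((2:ℝ) ^ (-((|z.1 - z.2| : ℤ):ℝ)*(α/4))) * (SX n yf z.2) ^ (2⁻¹:ℝ) with hg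
  have heq : ∀ z : ℤ × ℤ, ENNReal.ofReal ((2:ℝ) ^ (-((|z.1 - z.2| : ℤ):ℝ)*(α/2)))
      * ((SX n xf z.1) ^ (2⁻¹:ℝ) * (SX n yf z.2) ^ (2⁻¹:ℝ)) = f z * g z := by
    intro z
    rw [hf, hg]
    have h1 : ENNReal.ofReal ((2:ℝ) ^ (-((|z.1 - z.2| : ℤ):ℝ)*(α/2)))
        = ENNReal.ofReal ((2:ℝ) ^ (-((|z.1 - z.2| : ℤ):ℝ)*(α/4)))
          * ENNReal.ofReal ((2:ℝ) ^ (-((|z.1 - z.2| : ℤ):ℝ)*(α/4))) := by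
      rw [← ENNReal.ofReal_mul (by positivity), ← Real.rpow_add (by norm_num)]
      congr 1
      ring
    rw [h1]
    ring
  have hsq : ∀ z : ℤ × ℤ, f z ^ 2 = ENNReal.ofReal ((2:ℝ) ^ (-((|z.1 - z.2| : ℤ):ℝ)*(α/2)))
      * SX n xf z.1 := by
    intro z
    rw [hf, mul_pow, rpow_half_sq, ← ENNReal.ofReal_pow (by positivity)]
    congr 2
    rw [← Real.rpow_natCast ((2:ℝ) ^ (-((|z.1 - z.2| : ℤ):ℝ)*(α/4))) 2,
      ← Real.rpow_mul (by norm_num)]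
    congr 1
    push_cast
    ring
  have hsq' : ∀ z : ℤ × ℤ, g z ^ 2 = ENNReal.ofReal ((2:ℝ) ^ (-((|z.1 - z.2| : ℤ):ℝ)*(α/2)))
      * SX n yf z.2 := by
    intro z
    rw [hg, mul_pow, rpow_half_sq, ← ENNReal.ofReal_pow (by positivity)]
    congr 2
    rw [← Real.rpow_natCast ((2:ℝ) ^ (-((|z.1 - z.2| : ℤ):ℝ)*(α/4))) 2,
      ← Real.rpow_mul (by norm_num)]
    congr 1
    push_cast
    ring
  have hfsum : ∑' z : ℤ × ℤ, f z ^ 2 ≤ ENNReal.ofReal S2 * ∑' k : ℤ, SX n xf k := by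
    simp_rw [hsq]
    rw [ENNReal.tsum_prod (f := fun k l =>
      ENNReal.ofReal ((2:ℝ) ^ (-((|k - l| : ℤ):ℝ)*(α/2))) * SX n xf k)]
    calc ∑' k : ℤ, ∑' l : ℤ, ENNReal.ofReal ((2:ℝ) ^ (-((|k - l| : ℤ):ℝ)*(α/2))) * SX n xf k
        = ∑' k : ℤ, SX n xf k * ∑' l : ℤ, ENNReal.ofReal ((2:ℝ) ^ (-((|k - l| : ℤ):ℝ)*(α/2))) := by
          refine tsum_congr fun k => ?_
          rw [← ENNReal.tsum_mul_left]
          exact tsum_congr fun l => mul_comm _ _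
      _ ≤ ∑' k : ℤ, SX n xf k * ENNReal.ofReal S2 :=
          ENNReal.tsum_le_tsum fun k => mul_le_mul_right (geo2 (α/2) hα2 k) _
      _ = ENNReal.ofReal S2 * ∑' k : ℤ, SX n xf k := by
          rw [ENNReal.tsum_mul_right]; ring
  have hgsum : ∑' z : ℤ × ℤ, g z ^ 2 ≤ ENNReal.ofReal S2 * ∑' l : ℤ, SX n yf l := by
    simp_rw [hsq']
    rw [ENNReal.tsum_prod (f := fun k l =>
      ENNReal.ofReal ((2:ℝ) ^ (-((|k - l| : ℤ):ℝ)*(α/2))) * SX n yf l)]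
    calc ∑' k : ℤ, ∑' l : ℤ, ENNReal.ofReal ((2:ℝ) ^ (-((|k - l| : ℤ):ℝ)*(α/2))) * SX n yf l
        = ∑' k : ℤ, ∑' l : ℤ, SX n yf l * ENNReal.ofReal ((2:ℝ) ^ (-((|k - l| : ℤ):ℝ)*(α/2))) := by
          exact tsum_congr fun k => tsum_congr fun l => mul_comm _ _
      _ = ∑' l : ℤ, SX n yf l * ∑' k : ℤ, ENNReal.ofReal ((2:ℝ) ^ (-((|k - l| : ℤ):ℝ)*(α/2))) := by
          rw [ENNReal.tsum_comm]
          refine tsum_congr fun l => ?_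
          rw [← ENNReal.tsum_mul_left]
      _ ≤ ∑' l : ℤ, SX n yf l * ENNReal.ofReal S2 := by
          refine ENNReal.tsum_le_tsum fun l => mul_le_mul_right ?_ _
          have h := geo2 (α/2) hα2 l
          refine le_trans (le_of_eq ?_) h
          refine tsum_congr fun k => ?_
          rw [abs_sub_comm k l]
      _ = ENNReal.ofReal S2 * ∑' l : ℤ, SX n yf l := by
          rw [ENNReal.tsum_mul_right]; ring
  calc ∑' k : ℤ, ∑' l : ℤ, ENNReal.ofReal ((2:ℝ) ^ (-((|k - l| : ℤ):ℝ)*(α/2)))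
        * ((SX n xf k) ^ (2⁻¹:ℝ) * (SX n yf l) ^ (2⁻¹:ℝ))
      = ∑' z : ℤ × ℤ, f z * g z := by
        rw [← ENNReal.tsum_prod]
        exact tsum_congr fun z => heq z
    _ ≤ (∑' z : ℤ × ℤ, f z ^ 2) ^ (2⁻¹:ℝ) * (∑' z : ℤ × ℤ, g z ^ 2) ^ (2⁻¹:ℝ) := ecs f g
    _ ≤ (ENNReal.ofReal S2 * ∑' k : ℤ, SX n xf k) ^ (2⁻¹:ℝ)
        * (ENNReal.ofReal S2 * ∑' l : ℤ, SX n yf l) ^ (2⁻¹:ℝ) := by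
        exact mul_le_mul' (ENNReal.rpow_le_rpow hfsum (by norm_num))
          (ENNReal.rpow_le_rpow hgsum (by norm_num))
    _ = ENNReal.ofReal S2
        * ((∑' k : ℤ, SX n xf k) ^ (2⁻¹:ℝ) * (∑' l : ℤ, SX n yf l) ^ (2⁻¹:ℝ)) := by
        rw [ENNReal.mul_rpow_of_nonneg _ _ (by norm_num),
          ENNReal.mul_rpow_of_nonneg _ _ (by norm_num)]
        have hS2sq : ENNReal.ofReal S2 ^ (2⁻¹:ℝ) * ENNReal.ofReal S2 ^ (2⁻¹:ℝ)
            = ENNReal.ofReal S2 := by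
          have hS2pos : 0 < S2 := by
            rw [hS2]
            have := two_rpow_neg_lt_one hα2
            exact mul_pos two_pos (inv_pos.mpr (by linarith))
          rw [← ENNReal.rpow_add _ _ (ENNReal.ofReal_pos.mpr hS2pos).ne' ENNReal.ofReal_ne_top]
          norm_num
        calc ENNReal.ofReal S2 ^ (2⁻¹:ℝ) * (∑' k : ℤ, SX n xf k) ^ (2⁻¹:ℝ)
            * (ENNReal.ofReal S2 ^ (2⁻¹:ℝ) * (∑' l : ℤ, SX n yf l) ^ (2⁻¹:ℝ))
            = (ENNReal.ofReal S2 ^ (2⁻¹:ℝ) * ENNReal.ofReal S2 ^ (2⁻¹:ℝ))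
              * ((∑' k : ℤ, SX n xf k) ^ (2⁻¹:ℝ) * (∑' l : ℤ, SX n yf l) ^ (2⁻¹:ℝ)) := by ring
          _ = _ := by rw [hS2sq]

def dyEquiv (n : ℕ) : (ℤ × (Fin n → ℤ)) ≃ {Q : Cube n // Q.IsDyadic} :=
  Equiv.ofBijective (fun q => ⟨dQ n q.1 q.2, dQ_isDyadic n q.1 q.2⟩) (by
    constructor
    · rintro ⟨k, m⟩ ⟨k', m'⟩ h
      rw [Subtype.mk.injEq] at h
      have hside : (2:ℝ)^k = (2:ℝ)^k' := by
        have := congrArg Cube.side h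
        simpa using this
      have hk : k = k' := by
        have h2 := congrArg (Int.log 2) hside
        rw [show (2:ℝ)^k = ((2:ℕ):ℝ)^k by norm_num,
          show (2:ℝ)^k' = ((2:ℕ):ℝ)^k' by norm_num,
          Int.log_zpow (by norm_num), Int.log_zpow (by norm_num)] at h2
        exact h2
      subst hk
      have hm : m = m' := by
        funext i
        have := congrArg (fun Q : Cube n => Q.corner i) h
        simp only [dQ_corner] at this
        have h2 : ((m i):ℝ) = ((m' i):ℝ) := by
          have hpos : (2:ℝ)^k ≠ 0 := by positivity
          exact mul_left_cancel₀ hpos this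
        exact_mod_cast h2
      rw [hm]
    · rintro ⟨Q, k, m, hs, hc⟩
      refine ⟨(k, m), Subtype.ext (Cube.ext' ?_ ?_)⟩
      · ext i
        exact (hc i).symm
      · exact hs.symm)

lemma dyEquiv_apply (n : ℕ) (q : ℤ × (Fin n → ℤ)) :
    (dyEquiv n q).1 = dQ n q.1 q.2 := rfl

/-- The bilinear Schur-type estimate for the matrix
`A_{QR}^α = ℓ(Q)^{α/2} ℓ(R)^{α/2} D(Q,R)^{−(n+α)} σ(Q)^{1/2} w(R)^{1/2}`:
`(Σ_{Q,R} A_{QR}^α x_Q y_R)² ≤ C 𝒜₂² (Σ_Q x_Q²)(Σ_R y_R²)`. -/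
theorem bilinear_AQR_estimate
    (n : ℕ) (hn : 1 ≤ n) (α : ℝ) (hα : 0 < α) :
    ∃ C : ℝ, 0 < C ∧
      ∀ σ w : E n → ℝ, IsWeight σ → IsWeight w →
        ∀ A2 : ℝ, 0 ≤ A2 → A2sq σ w ≤ ENNReal.ofReal (A2 ^ 2) →
          ∀ xf yf : Cube n → ℝ, (∀ Q, 0 ≤ xf Q) → (∀ R, 0 ≤ yf R) →
            (∑' Q : {Q : Cube n // Q.IsDyadic}, ∑' R : {R : Cube n // R.IsDyadic},
                ENNReal.ofReal
                  (Q.1.side ^ (α / 2) * R.1.side ^ (α / 2) /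
                      (Q.1.side + R.1.side + sdist Q.1.set R.1.set) ^ ((n : ℝ) + α) *
                    Real.sqrt (cInt σ Q.1) * Real.sqrt (cInt w R.1) * xf Q.1 * yf R.1)) ^ 2
              ≤ ENNReal.ofReal (C * A2 ^ 2) *
                  (∑' Q : {Q : Cube n // Q.IsDyadic}, ENNReal.ofReal (xf Q.1 ^ 2)) *
                  (∑' R : {R : Cube n // R.IsDyadic}, ENNReal.ofReal (yf R.1 ^ 2)) := by
  have hg1 : (0:ℝ) < (1 - (2:ℝ)^(-α))⁻¹ :=
    inv_pos.mpr (by linarith [two_rpow_neg_lt_one hα])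
  have hg2 : (0:ℝ) < 2 * (1 - (2:ℝ)^(-(α/2)))⁻¹ :=
    mul_pos two_pos (inv_pos.mpr (by linarith [two_rpow_neg_lt_one (by linarith : 0 < α/2)]))
  set CC : ℝ := (3:ℝ)^n * 5^n * (1 - (2:ℝ)^(-α))⁻¹ * (2 * (1 - (2:ℝ)^(-(α/2)))⁻¹) with hCC
  have hCCpos : 0 < CC := by
    rw [hCC]
    positivity
  refine ⟨CC ^ 2, by positivity, ?_⟩
  intro σ w hσ hw A2 hA2n hA2 xf yf hx hy
  set CA : ℝ := A2 * 3^n * 5^n * (1 - (2:ℝ)^(-α))⁻¹ with hCA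
  have hCAn : 0 ≤ CA := by
    rw [hCA]
    have := hg1.le
    positivity
  set S2 : ℝ := 2 * (1 - (2:ℝ)^(-(α/2)))⁻¹ with hS2
  set X : ℝ≥0∞ := ∑' Q : {Q : Cube n // Q.IsDyadic}, ENNReal.ofReal (xf Q.1 ^ 2) with hX
  set Y : ℝ≥0∞ := ∑' R : {R : Cube n // R.IsDyadic}, ENNReal.ofReal (yf R.1 ^ 2) with hY
  have hXeq : X = ∑' k : ℤ, SX n xf k := by
    rw [hX, ← (dyEquiv n).tsum_eq (fun Q => ENNReal.ofReal (xf Q.1 ^ 2))]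
    exact ENNReal.tsum_prod (f := fun k m => ENNReal.ofReal (xf (dQ n k m) ^ 2))
  have hYeq : Y = ∑' l : ℤ, SX n yf l := by
    rw [hY, ← (dyEquiv n).tsum_eq (fun R => ENNReal.ofReal (yf R.1 ^ 2))]
    exact ENNReal.tsum_prod (f := fun l p => ENNReal.ofReal (yf (dQ n l p) ^ 2))
  -- rewrite the double sum
  have hLeq : (∑' Q : {Q : Cube n // Q.IsDyadic}, ∑' R : {R : Cube n // R.IsDyadic},
      ENNReal.ofReal
        (Q.1.side ^ (α / 2) * R.1.side ^ (α / 2) /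
            (Q.1.side + R.1.side + sdist Q.1.set R.1.set) ^ ((n : ℝ) + α) *
          Real.sqrt (cInt σ Q.1) * Real.sqrt (cInt w R.1) * xf Q.1 * yf R.1))
      = ∑' k : ℤ, ∑' l : ℤ, ∑' m : Fin n → ℤ, ∑' p : Fin n → ℤ,
          ENNReal.ofReal (rT n α σ w xf yf k m l p) := by
    rw [← (dyEquiv n).tsum_eq]
    rw [ENNReal.tsum_prod (f := fun k m => ∑' R : {R : Cube n // R.IsDyadic},
      ENNReal.ofReal
        (((dyEquiv n (k, m)).1.side ^ (α / 2) * R.1.side ^ (α / 2) /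
            ((dyEquiv n (k, m)).1.side + R.1.side + sdist (dyEquiv n (k, m)).1.set R.1.set)
              ^ ((n : ℝ) + α) *
          Real.sqrt (cInt σ (dyEquiv n (k, m)).1) * Real.sqrt (cInt w R.1)
            * xf (dyEquiv n (k, m)).1 * yf R.1)))]
    have hstep : ∀ k : ℤ, ∀ m : Fin n → ℤ,
        (∑' R : {R : Cube n // R.IsDyadic},
          ENNReal.ofReal
            (((dyEquiv n (k, m)).1.side ^ (α / 2) * R.1.side ^ (α / 2) /
                ((dyEquiv n (k, m)).1.side + R.1.side + sdist (dyEquiv n (k, m)).1.set R.1.set)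
                  ^ ((n : ℝ) + α) *
              Real.sqrt (cInt σ (dyEquiv n (k, m)).1) * Real.sqrt (cInt w R.1)
                * xf (dyEquiv n (k, m)).1 * yf R.1)))
        = ∑' l : ℤ, ∑' p : Fin n → ℤ, ENNReal.ofReal (rT n α σ w xf yf k m l p) := by
      intro k m
      rw [← (dyEquiv n).tsum_eq]
      exact ENNReal.tsum_prod (f := fun l p => ENNReal.ofReal (rT n α σ w xf yf k m l p))
    calc ∑' k : ℤ, ∑' m : Fin n → ℤ, _ = ∑' k : ℤ, ∑' m : Fin n → ℤ,
          ∑' l : ℤ, ∑' p : Fin n → ℤ, ENNReal.ofReal (rT n α σ w xf yf k m l p) :=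
          tsum_congr fun k => tsum_congr fun m => hstep k m
      _ = ∑' k : ℤ, ∑' l : ℤ, ∑' m : Fin n → ℤ, ∑' p : Fin n → ℤ,
          ENNReal.ofReal (rT n α σ w xf yf k m l p) :=
          tsum_congr fun k => ENNReal.tsum_comm
  rw [hLeq]
  -- apply mid and schur
  have hmain : (∑' k : ℤ, ∑' l : ℤ, ∑' m : Fin n → ℤ, ∑' p : Fin n → ℤ,
      ENNReal.ofReal (rT n α σ w xf yf k m l p))
      ≤ ENNReal.ofReal CA * (ENNReal.ofReal S2 * (X ^ (2⁻¹:ℝ) * Y ^ (2⁻¹:ℝ))) := by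
    calc (∑' k : ℤ, ∑' l : ℤ, ∑' m : Fin n → ℤ, ∑' p : Fin n → ℤ,
        ENNReal.ofReal (rT n α σ w xf yf k m l p))
        ≤ ∑' k : ℤ, ∑' l : ℤ, ENNReal.ofReal CA
          * (ENNReal.ofReal ((2:ℝ) ^ (-((|k - l| : ℤ):ℝ)*(α/2)))
            * ((SX n xf k) ^ (2⁻¹:ℝ) * (SX n yf l) ^ (2⁻¹:ℝ))) := by
          refine ENNReal.tsum_le_tsum fun k => ENNReal.tsum_le_tsum fun l => ?_
          refine le_trans (mid hσ hw hA2n hA2 hα hx hy k l) (le_of_eq ?_)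
          rw [hCA, mul_assoc]
      _ = ENNReal.ofReal CA * ∑' k : ℤ, ∑' l : ℤ,
          ENNReal.ofReal ((2:ℝ) ^ (-((|k - l| : ℤ):ℝ)*(α/2)))
            * ((SX n xf k) ^ (2⁻¹:ℝ) * (SX n yf l) ^ (2⁻¹:ℝ)) := by
          rw [← ENNReal.tsum_mul_left]
          exact tsum_congr fun k => (ENNReal.tsum_mul_left (a := ENNReal.ofReal CA)
            (f := fun l => ENNReal.ofReal ((2:ℝ) ^ (-((|k - l| : ℤ):ℝ)*(α/2)))
              * ((SX n xf k) ^ (2⁻¹:ℝ) * (SX n yf l) ^ (2⁻¹:ℝ))))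
      _ ≤ ENNReal.ofReal CA * (ENNReal.ofReal S2
          * ((∑' k : ℤ, SX n xf k) ^ (2⁻¹:ℝ) * (∑' l : ℤ, SX n yf l) ^ (2⁻¹:ℝ))) :=
          mul_le_mul_right (schur hα xf yf) _
      _ = ENNReal.ofReal CA * (ENNReal.ofReal S2 * (X ^ (2⁻¹:ℝ) * Y ^ (2⁻¹:ℝ))) := by
          rw [hXeq, hYeq]
  calc (∑' k : ℤ, ∑' l : ℤ, ∑' m : Fin n → ℤ, ∑' p : Fin n → ℤ,
      ENNReal.ofReal (rT n α σ w xf yf k m l p)) ^ 2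
      ≤ (ENNReal.ofReal CA * (ENNReal.ofReal S2 * (X ^ (2⁻¹:ℝ) * Y ^ (2⁻¹:ℝ)))) ^ 2 := by
        rw [pow_two, pow_two]
        exact mul_le_mul' hmain hmain
    _ = (ENNReal.ofReal CA ^ 2 * ENNReal.ofReal S2 ^ 2)
        * ((X ^ (2⁻¹:ℝ)) ^ 2 * (Y ^ (2⁻¹:ℝ)) ^ 2) := by ring
    _ = ENNReal.ofReal (CC ^ 2 * A2 ^ 2) * X * Y := by
        rw [rpow_half_sq, rpow_half_sq, ← ENNReal.ofReal_pow hCAn,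
          ← ENNReal.ofReal_pow hg2.le, ← ENNReal.ofReal_mul (by positivity)]
        rw [show CA ^ 2 * S2 ^ 2 = CC ^ 2 * A2 ^ 2 by rw [hCA, hCC, hS2]; ring]
        ring

end
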